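/- arXiv:2512.22157 — 11 statements merged into one kernel-verified Lean document; each statement's English description precedes it below -/
import Mathlib

section
/- The matrix S∞ = (I − K)⁻¹ * F dominates F entrywise, i.e. S∞ i j ≥ F i j ≥ 0 for all i, j; consequently, if F is irreducible then S∞ is irreducible. -/
/-!
Since `K ≥ 0` has row sums `< 1`, a minimum principle holds for `1 - K`: if `(1 - K) x ≥ 0`
then `x ≥ 0`, because at an index `i₀` minimising `x` we get `x i₀ ≥ (∑ⱼ K i₀ j) * x i₀`. Hence `1 - K`
is injective, so invertible, and its inverse is entrywise nonnegative. Then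
`S∞ - F = (1 - K)⁻¹ K F ≥ 0`, and `0 ≤ F ≤ S∞` gives `F ^ k ≤ S∞ ^ k` entrywise, so every
positive entry of a power of `F` is a positive entry of the same power of `S∞`.
-/

open Matrix Finset

namespace Matrix

variable {ι R : Type*} [Fintype ι]

section OrderedSemiring

variable [Semiring R] [PartialOrder R] [IsOrderedRing R]

theorem mul_apply_nonneg {A B : Matrix ι ι R} (hA : ∀ i j, 0 ≤ A i j) (hB : ∀ i j, 0 ≤ B i j)
    (i j : ι) : 0 ≤ (A * B) i j :=
  sum_nonneg fun l _ => mul_nonneg (hA i l) (hB l j)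

variable [DecidableEq ι]

theorem pow_apply_le_pow_apply {A B : Matrix ι ι R} (hA : ∀ i j, 0 ≤ A i j)
    (hAB : ∀ i j, A i j ≤ B i j) (k : ℕ) (i j : ι) : (A ^ k) i j ≤ (B ^ k) i j := by
  induction k generalizing j with
  | zero => rfl
  | succ k ih =>
    rw [pow_succ, pow_succ, mul_apply, mul_apply]
    exact sum_le_sum fun l _ => mul_le_mul (ih l) (hAB l j) (hA l j)
      ((pow_apply_nonneg hA k i l).trans (ih l))

end OrderedSemiring

section OrderedField

variable [DecidableEq ι] [Field R] [LinearOrder R] [IsStrictOrderedRing R] {K : Matrix ι ι R}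

theorem nonneg_of_one_sub_mulVec_nonneg (hK : ∀ i j, 0 ≤ K i j) (hrow : ∀ i, ∑ j, K i j < 1)
    {x : ι → R} (hx : ∀ i, 0 ≤ ((1 - K) *ᵥ x) i) (i : ι) : 0 ≤ x i := by
  have : Nonempty ι := ⟨i⟩
  obtain ⟨i₀, hmin⟩ := Finite.exists_min x
  have hstep : (∑ j, K i₀ j) * x i₀ ≤ x i₀ := calc
    (∑ j, K i₀ j) * x i₀ = ∑ j, K i₀ j * x i₀ := sum_mul ..
    _ ≤ ∑ j, K i₀ j * x j := sum_le_sum fun j _ => mul_le_mul_of_nonneg_left (hmin j) (hK i₀ j)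
    _ ≤ x i₀ := by
      have h := hx i₀
      rwa [sub_mulVec, one_mulVec, Pi.sub_apply, sub_nonneg] at h
  have hx₀ : 0 ≤ x i₀ := nonneg_of_mul_nonneg_right (by linarith) (sub_pos.2 (hrow i₀))
  exact hx₀.trans (hmin i)

theorem isUnit_one_sub (hK : ∀ i j, 0 ≤ K i j) (hrow : ∀ i, ∑ j, K i j < 1) :
    IsUnit (1 - K) := by
  have hmono {x y : ι → R} (h : (1 - K) *ᵥ x = (1 - K) *ᵥ y) (i : ι) : y i ≤ x i :=
    sub_nonneg.1 <| nonneg_of_one_sub_mulVec_nonneg hK hrow (x := x - y)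
      (fun l => by rw [mulVec_sub, h, sub_self]; rfl) i
  exact mulVec_injective_iff_isUnit.1 fun x y h =>
    funext fun i => le_antisymm (hmono h.symm i) (hmono h i)

theorem inv_one_sub_apply_nonneg (hK : ∀ i j, 0 ≤ K i j) (hrow : ∀ i, ∑ j, K i j < 1)
    (i j : ι) : 0 ≤ (1 - K)⁻¹ i j := by
  have hinv : (1 - K) * (1 - K)⁻¹ = 1 :=
    mul_nonsing_inv _ ((isUnit_iff_isUnit_det _).1 (isUnit_one_sub hK hrow))
  refine nonneg_of_one_sub_mulVec_nonneg hK hrow (x := fun l => (1 - K)⁻¹ l j) (fun l => ?_) i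
  change 0 ≤ ((1 - K) * (1 - K)⁻¹) l j
  rw [hinv, one_apply]
  split_ifs <;> simp

theorem le_inv_one_sub_mul_apply (hK : ∀ i j, 0 ≤ K i j) (hrow : ∀ i, ∑ j, K i j < 1)
    {F : Matrix ι ι R} (hF : ∀ i j, 0 ≤ F i j) (i j : ι) : F i j ≤ ((1 - K)⁻¹ * F) i j := by
  have hinv : (1 - K)⁻¹ * (1 - K) = 1 :=
    nonsing_inv_mul _ ((isUnit_iff_isUnit_det _).1 (isUnit_one_sub hK hrow))
  have hdiff : (1 - K)⁻¹ * F = (1 - K)⁻¹ * ((1 - K) * F) + (1 - K)⁻¹ * (K * F) := by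
    rw [← mul_add, sub_mul, one_mul, sub_add_cancel]
  rw [← mul_assoc, hinv, one_mul] at hdiff
  rw [hdiff, add_apply, le_add_iff_nonneg_right]
  exact mul_apply_nonneg (inv_one_sub_apply_nonneg hK hrow) (mul_apply_nonneg hK hF) i j

end OrderedField

end Matrix

theorem Finset.sum_mul_lt_one_of_sum_eq_one {ι R : Type*} [Fintype ι] [Semiring R] [LinearOrder R]
    [IsStrictOrderedRing R] {f b : ι → R} (hf : ∀ j, 0 ≤ f j) (hsum : ∑ j, f j = 1)
    (hb : ∀ j, b j < 1) : ∑ j, f j * b j < 1 := by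
  obtain ⟨j, -, hj⟩ := exists_lt_of_sum_lt (f := 0) (g := f) (s := univ) (by simp [hsum])
  rw [← hsum]
  refine sum_lt_sum (fun l _ => mul_le_of_le_one_right (hf l) (hb l).le) ⟨j, mem_univ j, ?_⟩
  exact mul_lt_of_lt_one_right hj (hb j)

theorem stmt_2_general (n : ℕ)
    (F : Matrix (Fin n) (Fin n) ℝ)
    (hFnonneg : ∀ i j, 0 ≤ F i j)
    (hFrow : ∀ i, ∑ j, F i j = 1)
    (b : Fin n → ℝ) (hb0 : ∀ j, 0 ≤ b j) (hb1 : ∀ j, b j < 1)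
    (K : Matrix (Fin n) (Fin n) ℝ)
    (hK : ∀ i j, K i j = F i j * b j)
    (S : Matrix (Fin n) (Fin n) ℝ)
    (hS : S = (1 - K)⁻¹ * F) :
    (∀ i j, F i j ≤ S i j ∧ 0 ≤ F i j) ∧
    ((∀ i j, ∃ k : ℕ, 1 ≤ k ∧ 0 < (F ^ k) i j) →
      (∀ i j, ∃ k : ℕ, 1 ≤ k ∧ 0 < (S ^ k) i j)) := by
  have hKnonneg : ∀ i j, 0 ≤ K i j := fun i j => hK i j ▸ mul_nonneg (hFnonneg i j) (hb0 j)
  have hKrow : ∀ i, ∑ j, K i j < 1 := fun i => by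
    simpa only [hK] using sum_mul_lt_one_of_sum_eq_one (hFnonneg i) (hFrow i) hb1
  have hdom : ∀ i j, F i j ≤ S i j := hS ▸ le_inv_one_sub_mul_apply hKnonneg hKrow hFnonneg
  refine ⟨fun i j => ⟨hdom i j, hFnonneg i j⟩, fun hirr i j => ?_⟩
  obtain ⟨k, hk, hpos⟩ := hirr i j
  exact ⟨k, hk, hpos.trans_le (pow_apply_le_pow_apply hFnonneg hdom k i j)⟩

/-- The matrix `S∞ = (I − K)⁻¹ * F` dominates `F` entrywise, i.e.
`S∞ i j ≥ F i j ≥ 0` for all `i, j`; consequently, if `F` is irreducible then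
`S∞` is irreducible (irreducible: for every `(i,j)` there is `k ≥ 1` with
`(X^k) i j > 0`). -/
theorem stmt_2 (n : ℕ) (hn : 1 ≤ n)
    (F : Matrix (Fin n) (Fin n) ℝ)
    (hFnonneg : ∀ i j, 0 ≤ F i j)
    (hFrow : ∀ i, ∑ j, F i j = 1)
    (b : Fin n → ℝ) (hb0 : ∀ j, 0 ≤ b j) (hb1 : ∀ j, b j < 1)
    (K : Matrix (Fin n) (Fin n) ℝ)
    (hK : ∀ i j, K i j = F i j * b j)
    (hInv : IsUnit (1 - K))
    (S : Matrix (Fin n) (Fin n) ℝ)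
    (hS : S = (1 - K)⁻¹ * F) :
    (∀ i j, F i j ≤ S i j ∧ 0 ≤ F i j) ∧
    ((∀ i j, ∃ k : ℕ, 1 ≤ k ∧ 0 < (F ^ k) i j) →
      (∀ i j, ∃ k : ℕ, 1 ≤ k ∧ 0 < (S ^ k) i j)) :=
  stmt_2_general n F hFnonneg hFrow b hb0 hb1 K hK S hS
end

section
/- Let r := max_i ∑_j K i j be the largest row sum of K, so that r ≤ max_j b_j < 1. Then the determinant of I − K satisfies det(I − K) ≥ (1 − r)^n > 0; in particular, for the uniform case b j = γ for all j with γ ∈ [0,1), det(I − γ·F) ≥ (1 − γ)^n. -/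
open Matrix Finset

lemma key : ∀ (n : ℕ) (c : ℝ), 0 < c → ∀ (A : Matrix (Fin n) (Fin n) ℝ),
    (∀ i j, i ≠ j → A i j ≤ 0) → (∀ i, c ≤ ∑ j, A i j) → c ^ n ≤ A.det := by
  intro n
  induction n with
  | zero => intro c hc A _ _; simp [Matrix.det_fin_zero]
  | succ n ih =>
    intro c hc A hoff hrow
    have ha : c ≤ A 0 0 := by
      have h := hrow 0
      rw [Fin.sum_univ_succ] at h
      have hsum : ∑ j : Fin n, A 0 j.succ ≤ 0 :=
        Finset.sum_nonpos fun j _ => hoff 0 j.succ (Fin.succ_ne_zero j).symm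
      linarith
    have ha0 : 0 < A 0 0 := lt_of_lt_of_le hc ha
    have hainv : 0 < (A 0 0)⁻¹ := inv_pos.mpr ha0
    set e : Fin 1 ⊕ Fin n ≃ Fin (n+1) := finSumFinEquiv.trans (finCongr (Nat.add_comm 1 n)) with he
    have hinl : ∀ x : Fin 1, e (Sum.inl x) = 0 := by
      intro x; apply Fin.ext; simp [he, Fin.fin_one_eq_zero x]
    have hinr : ∀ j : Fin n, e (Sum.inr j) = j.succ := by
      intro j; apply Fin.ext; simp [he]
    set N := A.submatrix e e with hN
    have hdet : N.det = A.det := Matrix.det_submatrix_equiv_self e A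
    have h11 : N.toBlocks₁₁ = Matrix.of fun _ _ : Fin 1 => A 0 0 := by
      ext i j
      simp [Matrix.toBlocks₁₁, hN, hinl]
    have hdet11 : N.toBlocks₁₁.det = A 0 0 := by
      rw [Matrix.det_fin_one, h11]; rfl
    haveI : Invertible N.toBlocks₁₁ :=
      N.toBlocks₁₁.invertibleOfIsUnitDet (by rw [hdet11]; exact isUnit_iff_ne_zero.mpr ha0.ne')
    set S := N.toBlocks₂₂ - N.toBlocks₂₁ * ⅟N.toBlocks₁₁ * N.toBlocks₁₂ with hSdef
    have hdetA : A.det = A 0 0 * S.det := by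
      rw [← hdet]
      conv_lhs => rw [← Matrix.fromBlocks_toBlocks N]
      rw [Matrix.det_fromBlocks₁₁, hdet11]
    have hSent : ∀ (i j : Fin n), S i j
        = A i.succ j.succ - A i.succ 0 * (A 0 0)⁻¹ * A 0 j.succ := by
      intro i j
      have hS11 : (⅟N.toBlocks₁₁ : Matrix (Fin 1) (Fin 1) ℝ) 0 0 = (A 0 0)⁻¹ := by
        rw [invOf_eq_nonsing_inv, Matrix.inv_def, hdet11, Matrix.adjugate_fin_one]
        simp [Ring.inverse_eq_inv']
      simp [hSdef, Matrix.sub_apply, Matrix.mul_apply, Fin.sum_univ_one, hS11,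
        Matrix.toBlocks₂₂, Matrix.toBlocks₂₁, Matrix.toBlocks₁₂, hN, hinl, hinr]
      exact Or.inl (Or.inl (by simp [Matrix.toBlocks₁₁, hinl]))
    have hSoff : ∀ i j, i ≠ j → S i j ≤ 0 := by
      intro i j hij
      rw [hSent i j]
      have h1 : A i.succ j.succ ≤ 0 := hoff _ _ (fun h => hij (Fin.succ_injective n h))
      have h2 : A i.succ 0 ≤ 0 := hoff _ _ (Fin.succ_ne_zero i)
      have h3 : A 0 j.succ ≤ 0 := hoff _ _ (Fin.succ_ne_zero j).symm
      have h4 : 0 ≤ (-(A i.succ 0)) * (A 0 0)⁻¹ * (-(A 0 j.succ)) :=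
        mul_nonneg (mul_nonneg (by linarith) hainv.le) (by linarith)
      nlinarith [h4]
    have hSrow : ∀ i, c ≤ ∑ j, S i j := by
      intro i
      have hRi := hrow i.succ
      have hR0 := hrow 0
      rw [Fin.sum_univ_succ] at hRi hR0
      have h2 : A i.succ 0 ≤ 0 := hoff _ _ (Fin.succ_ne_zero i)
      have hsum : ∑ j, S i j = (∑ j : Fin n, A i.succ j.succ)
          - A i.succ 0 * (A 0 0)⁻¹ * (∑ j : Fin n, A 0 j.succ) := by
        simp only [hSent]
        rw [Finset.sum_sub_distrib, ← Finset.mul_sum]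
      rw [hsum]
      have hR0pos : 0 < A 0 0 + ∑ j : Fin n, A 0 j.succ := lt_of_lt_of_le hc hR0
      have key1 : 0 ≤ -(A i.succ 0) * (A 0 0)⁻¹ * (A 0 0 + ∑ j : Fin n, A 0 j.succ) := by
        apply mul_nonneg (mul_nonneg (by linarith) hainv.le) hR0pos.le
      have hinvmul : (A 0 0)⁻¹ * A 0 0 = 1 := inv_mul_cancel₀ ha0.ne'
      nlinarith
    have hS := ih c hc S hSoff hSrow
    rw [hdetA, pow_succ']
    have hcp : (0:ℝ) < c ^ n := pow_pos hc n
    calc c * c ^ n ≤ A 0 0 * c ^ n := by nlinarith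
      _ ≤ A 0 0 * S.det := by nlinarith

/-- Let `r := max_i ∑_j K i j` be the largest row sum of `K`, so
that `r ≤ max_j b_j < 1`. Then `det(I − K) ≥ (1 − r)^n > 0`; in particular, for
the uniform case `b j = γ` for all `j` with `γ ∈ [0,1)`,
`det(I − γ·F) ≥ (1 − γ)^n`. -/
theorem stmt_3 (n : ℕ) (hn : 1 ≤ n)
    (hne : (Finset.univ : Finset (Fin n)).Nonempty)
    (F : Matrix (Fin n) (Fin n) ℝ)
    (hFnonneg : ∀ i j, 0 ≤ F i j)
    (hFrow : ∀ i, ∑ j, F i j = 1)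
    (b : Fin n → ℝ) (hb0 : ∀ j, 0 ≤ b j) (hb1 : ∀ j, b j < 1)
    (K : Matrix (Fin n) (Fin n) ℝ)
    (hK : ∀ i j, K i j = F i j * b j)
    (r : ℝ) (hr : r = Finset.univ.sup' hne (fun i => ∑ j, K i j)) :
    r ≤ Finset.univ.sup' hne b ∧
    Finset.univ.sup' hne b < 1 ∧
    (1 - r) ^ n ≤ (1 - K).det ∧
    0 < (1 - r) ^ n ∧
    (∀ γ : ℝ, 0 ≤ γ → γ < 1 → (∀ j, b j = γ) →
      (1 - γ) ^ n ≤ (1 - γ • F).det) := by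
  have hble : ∀ j, b j ≤ Finset.univ.sup' hne b := fun j => Finset.le_sup' b (Finset.mem_univ j)
  have hB1 : Finset.univ.sup' hne b < 1 := (Finset.sup'_lt_iff hne).mpr fun j _ => hb1 j
  have hrB : r ≤ Finset.univ.sup' hne b := by
    rw [hr]
    apply Finset.sup'_le
    intro i _
    calc ∑ j, K i j ≤ ∑ j, F i j * Finset.univ.sup' hne b :=
          Finset.sum_le_sum fun j _ => by
            rw [hK]; exact mul_le_mul_of_nonneg_left (hble j) (hFnonneg i j)
      _ = Finset.univ.sup' hne b := by rw [← Finset.sum_mul, hFrow i, one_mul]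
  have hr1 : r < 1 := lt_of_le_of_lt hrB hB1
  have hc : 0 < 1 - r := by linarith
  have hone : ∀ i : Fin n, ∑ j, (1 : Matrix (Fin n) (Fin n) ℝ) i j = 1 := by
    intro i
    simp [Matrix.one_apply]
  refine ⟨hrB, hB1, ?_, pow_pos hc n, ?_⟩
  · apply key n (1 - r) hc
    · intro i j hij
      rw [Matrix.sub_apply, Matrix.one_apply_ne hij]
      have : 0 ≤ K i j := by rw [hK]; exact mul_nonneg (hFnonneg i j) (hb0 j)
      linarith
    · intro i
      have h1 : ∑ j, ((1 : Matrix (Fin n) (Fin n) ℝ) - K) i j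
          = 1 - ∑ j, K i j := by
        simp only [Matrix.sub_apply, Finset.sum_sub_distrib, hone]
      have h2 : ∑ j, K i j ≤ r := hr ▸ Finset.le_sup' (fun i => ∑ j, K i j) (Finset.mem_univ i)
      rw [h1]; linarith
  · intro γ hγ0 hγ1 _
    have hcγ : 0 < 1 - γ := by linarith
    apply key n (1 - γ) hcγ
    · intro i j hij
      rw [Matrix.sub_apply, Matrix.one_apply_ne hij, Matrix.smul_apply, smul_eq_mul]
      have : 0 ≤ γ * F i j := mul_nonneg hγ0 (hFnonneg i j)
      linarith
    · intro i
      have h1 : ∑ j, ((1 : Matrix (Fin n) (Fin n) ℝ) - γ • F) i j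
          = 1 - γ * ∑ j, F i j := by
        simp only [Matrix.sub_apply, Finset.sum_sub_distrib, hone, Matrix.smul_apply,
          smul_eq_mul, Finset.mul_sum]
      rw [h1, hFrow i, mul_one]
end

section
/- The vector v with components v i = 1 − b i (which has all components strictly positive) satisfies (A + R).mulVec v = v; that is, v is an eigenvector of A + R with eigenvalue 1. -/
open Matrix

/-- The vector `v` with components `v i = 1 − b i` (which has all
components strictly positive) satisfies `(A + R).mulVec v = v`; that is, `v` is
an eigenvector of `A + R` with eigenvalue `1`. -/
theorem stmt_5 (n : ℕ) (hn : 1 ≤ n)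
    (F : Matrix (Fin n) (Fin n) ℝ)
    (hFnonneg : ∀ i j, 0 ≤ F i j)
    (hFrow : ∀ i, ∑ j, F i j = 1)
    (b : Fin n → ℝ) (hb0 : ∀ j, 0 ≤ b j) (hb1 : ∀ j, b j < 1)
    (K : Matrix (Fin n) (Fin n) ℝ)
    (hK : ∀ i j, K i j = F i j * b j)
    (hInv : IsUnit (1 - K))
    (S : Matrix (Fin n) (Fin n) ℝ)
    (hS : S = (1 - K)⁻¹ * F)
    (A R : Matrix (Fin n) (Fin n) ℝ)
    (hA : ∀ i j, A i j = (1 - b i) * S i j * (1 - b j))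
    (hR : ∀ i j, R i j = (1 - b i) * S i j * b j) :
    (∀ i, 0 < 1 - b i) ∧
    (A + R).mulVec (fun i => 1 - b i) = (fun i => 1 - b i) := by
  have hF1 : F.mulVec (fun j => 1 - b j) = (1 - K).mulVec (fun _ => 1) := by
    funext i
    simp only [Matrix.mulVec, dotProduct, Matrix.sub_apply, Matrix.one_apply,
      mul_sub, sub_mul, mul_one, hK]
    rw [Finset.sum_sub_distrib, Finset.sum_sub_distrib]
    simp [Finset.sum_ite_eq, hFrow]
  have hS1 : S.mulVec (fun j => 1 - b j) = (fun _ => 1) := by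
    rw [hS, ← Matrix.mulVec_mulVec, hF1, Matrix.mulVec_mulVec,
      Matrix.nonsing_inv_mul _ ((Matrix.isUnit_iff_isUnit_det _).mp hInv),
      Matrix.one_mulVec]
  refine ⟨fun i => by linarith [hb1 i], ?_⟩
  funext i
  have h2 : ∑ j, S i j * (1 - b j) = 1 := congrFun hS1 i
  simp only [Matrix.mulVec, dotProduct, Matrix.add_apply, hA, hR] at *
  calc ∑ j, ((1 - b i) * S i j * (1 - b j) + (1 - b i) * S i j * b j) * (1 - b j)
      = (1 - b i) * ∑ j, S i j * (1 - b j) := by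
        rw [Finset.mul_sum]; apply Finset.sum_congr rfl; intro j _; ring
    _ = 1 - b i := by rw [h2, mul_one]
end

section
/- Let P be the diagonal matrix with diagonal entries P i i = 1 − b i. Then A = (A + R) * P, and the row sums of A satisfy ∑_j A i j = 1 − b i for every i. -/
open Matrix

/-- Let `P` be the diagonal matrix with diagonal entries
`P i i = 1 − b i`. Then `A = (A + R) * P`, and the row sums of `A` satisfy
`∑_j A i j = 1 − b i` for every `i`. -/
theorem stmt_7 (n : ℕ) (hn : 1 ≤ n)
    (F : Matrix (Fin n) (Fin n) ℝ)
    (hFnonneg : ∀ i j, 0 ≤ F i j)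
    (hFrow : ∀ i, ∑ j, F i j = 1)
    (b : Fin n → ℝ) (hb0 : ∀ j, 0 ≤ b j) (hb1 : ∀ j, b j < 1)
    (K : Matrix (Fin n) (Fin n) ℝ)
    (hK : ∀ i j, K i j = F i j * b j)
    (hInv : IsUnit (1 - K))
    (S : Matrix (Fin n) (Fin n) ℝ)
    (hS : S = (1 - K)⁻¹ * F)
    (A R : Matrix (Fin n) (Fin n) ℝ)
    (hA : ∀ i j, A i j = (1 - b i) * S i j * (1 - b j))
    (hR : ∀ i j, R i j = (1 - b i) * S i j * b j) :
    A = (A + R) * Matrix.diagonal (fun i => 1 - b i) ∧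
    (∀ i, ∑ j, A i j = 1 - b i) := by
  have hSv : S.mulVec (fun j => 1 - b j) = fun _ => (1 : ℝ) := by
    have hFv : F.mulVec (fun j => 1 - b j) = (1 - K).mulVec (fun _ => 1) := by
      funext i
      simp only [mulVec, dotProduct, Matrix.sub_apply, Matrix.one_apply, mul_one, hK]
      rw [Finset.sum_sub_distrib, Finset.sum_ite_eq Finset.univ i (fun _ => (1:ℝ))]
      simp only [Finset.mem_univ, if_true]
      have hsplit : ∑ j, F i j * (1 - b j) = (∑ j, F i j) - ∑ j, F i j * b j := by
        rw [← Finset.sum_sub_distrib]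
        exact Finset.sum_congr rfl fun j _ => by ring
      rw [hsplit, hFrow i]
    rw [hS, ← mulVec_mulVec, hFv, mulVec_mulVec,
      Matrix.nonsing_inv_mul _ ((Matrix.isUnit_iff_isUnit_det _).mp hInv)]
    funext i
    simp [mulVec, dotProduct, Matrix.one_apply]
  constructor
  · ext i j
    rw [Matrix.mul_diagonal]
    simp only [Matrix.add_apply, hA i j, hR i j]
    ring
  · intro i
    have := congrFun hSv i
    simp only [mulVec, dotProduct] at this
    calc ∑ j, A i j = (1 - b i) * ∑ j, S i j * (1 - b j) := by
          rw [Finset.mul_sum]; exact Finset.sum_congr rfl fun j _ => by rw [hA]; ring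
      _ = 1 - b i := by rw [this, mul_one]
end

section
/- Suppose b j = γ for all j, where γ ∈ [0,1). Then every row sum of R equals γ (i.e. R.mulVec 1 = γ·1), γ is a complex eigenvalue of R, and every complex eigenvalue μ of R satisfies |μ| ≤ γ; hence the spectral radius of R equals γ. -/
/-!
For `b ≡ γ` we have `K = γ F` and `R = γ (1 - γ) S`, so `(1 - γ F) R = γ (1 - γ) F`. Applied to
the all-ones vector this identity gives `R 𝟙 = γ 𝟙`, since `(1 - γ F) (γ 𝟙) = γ (1 - γ) 𝟙` as well
and `1 - γ F` is injective. Applied to an eigenvector `R v = μ v` it gives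
`μ v = γ (μ + 1 - γ) F v`; as the stochastic matrix `F` does not increase the sup norm,
`‖μ‖ ≤ γ (‖μ‖ + 1 - γ)`, i.e. `‖μ‖ ≤ γ`.
-/

open Matrix

namespace Matrix

variable {n : Type*} [Fintype n] [DecidableEq n]

theorem mem_spectrum_iff_exists_mulVec_eq_smul {K : Type*} [Field K] {A : Matrix n n K} {μ : K} :
    μ ∈ spectrum K A ↔ ∃ v ≠ 0, A *ᵥ v = μ • v := by
  rw [← spectrum_toLin', ← Module.End.hasEigenvalue_iff_mem_spectrum, Module.End.hasEigenvalue_iff]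
  simp [Submodule.ne_bot_iff, and_comm]

theorem smul_eq_smul_mulVec_of_one_sub_smul_mul_eq {R : Type*} [CommRing R] {F M : Matrix n n R}
    {γ c μ : R} {v : n → R} (h : (1 - γ • F) * M = c • F) (hv : M *ᵥ v = μ • v) :
    μ • v = (γ * μ + c) • (F *ᵥ v) := by
  have := congrArg (· *ᵥ v) h
  simp only [← mulVec_mulVec, hv, sub_mulVec, one_mulVec, smul_mulVec, mulVec_smul] at this
  rw [add_smul, ← this, mul_smul, smul_comm γ μ, smul_sub]
  abel

theorem mulVec_one_of_one_sub_smul_mul_eq {R : Type*} [CommRing R] {F M : Matrix n n R} {γ : R}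
    (h : (1 - γ • F) * M = (γ * (1 - γ)) • F) (hF : F *ᵥ 1 = 1) (hU : IsUnit (1 - γ • F)) :
    M *ᵥ 1 = γ • 1 := by
  refine mulVec_injective_of_isUnit hU ?_
  rw [mulVec_mulVec, h, smul_mulVec, hF, mulVec_smul, sub_mulVec, one_mulVec, smul_mulVec, hF,
    smul_sub, smul_smul, ← sub_smul, mul_one_sub]

theorem map_ofReal_one_sub_smul_mul_eq {F M : Matrix n n ℝ} {γ c : ℝ}
    (h : (1 - γ • F) * M = c • F) :
    (1 - (γ : ℂ) • F.map Complex.ofReal) * M.map Complex.ofReal =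
      (c : ℂ) • F.map Complex.ofReal := by
  have := congrArg Complex.ofRealHom.mapMatrix h
  simp only [map_mul, map_sub, map_one, RingHom.mapMatrix_apply,
    Matrix.map_smul' _ _ _ (map_mul Complex.ofRealHom)] at this
  exact this

theorem ofReal_mem_spectrum_map_of_mulVec_one [Nonempty n] {M : Matrix n n ℝ} {r : ℝ}
    (hM : M *ᵥ 1 = r • 1) : (r : ℂ) ∈ spectrum ℂ (M.map Complex.ofReal) := by
  refine mem_spectrum_iff_exists_mulVec_eq_smul.2 ⟨1, one_ne_zero, funext fun i => ?_⟩
  simpa [mulVec, dotProduct] using congrArg Complex.ofReal (congrFun hM i)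

section RowStochastic

variable {F : Matrix n n ℝ}

theorem norm_map_ofReal_mulVec_le (hF : F ∈ rowStochastic ℝ n) (v : n → ℂ) :
    ‖F.map Complex.ofReal *ᵥ v‖ ≤ ‖v‖ := by
  refine pi_norm_le_iff_of_nonneg (norm_nonneg v) |>.2 fun i => ?_
  calc ‖(F.map Complex.ofReal *ᵥ v) i‖ ≤ ∑ j, F i j * ‖v j‖ := by
        refine (norm_sum_le _ _).trans_eq (Finset.sum_congr rfl fun j _ => ?_)
        simp [Complex.norm_real, abs_of_nonneg (nonneg_of_mem_rowStochastic hF)]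
    _ ≤ ∑ j, F i j * ‖v‖ := by
        gcongr with j
        · exact nonneg_of_mem_rowStochastic hF
        · exact norm_le_pi_norm v j
    _ = ‖v‖ := by rw [← Finset.sum_mul, sum_row_of_mem_rowStochastic hF, one_mul]

theorem norm_le_of_smul_eq_smul_map_ofReal_mulVec (hF : F ∈ rowStochastic ℝ n) {v : n → ℂ}
    (hv : v ≠ 0) {μ ν : ℂ} (h : μ • v = ν • (F.map Complex.ofReal *ᵥ v)) : ‖μ‖ ≤ ‖ν‖ := by
  refine le_of_mul_le_mul_right ?_ (norm_pos_iff.2 hv)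
  calc ‖μ‖ * ‖v‖ = ‖ν‖ * ‖F.map Complex.ofReal *ᵥ v‖ := by rw [← norm_smul, h, norm_smul]
    _ ≤ ‖ν‖ * ‖v‖ := by gcongr; exact norm_map_ofReal_mulVec_le hF v

theorem norm_le_of_mem_spectrum_of_one_sub_smul_mul_eq (hF : F ∈ rowStochastic ℝ n)
    {M : Matrix n n ℝ} {γ : ℝ} (hγ0 : 0 ≤ γ) (hγ1 : γ < 1)
    (h : (1 - γ • F) * M = (γ * (1 - γ)) • F) {μ : ℂ}
    (hμ : μ ∈ spectrum ℂ (M.map Complex.ofReal)) : ‖μ‖ ≤ γ := by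
  obtain ⟨v, hv, hMv⟩ := mem_spectrum_iff_exists_mulVec_eq_smul.1 hμ
  have hμν := norm_le_of_smul_eq_smul_map_ofReal_mulVec hF hv
    (smul_eq_smul_mulVec_of_one_sub_smul_mul_eq (map_ofReal_one_sub_smul_mul_eq h) hMv)
  have hν : ‖(γ : ℂ) * μ + ((γ * (1 - γ) : ℝ) : ℂ)‖ ≤ γ * ‖μ‖ + γ * (1 - γ) := by
    refine (norm_add_le _ _).trans_eq ?_
    rw [norm_mul, Complex.norm_real, Complex.norm_real, Real.norm_of_nonneg hγ0,
      Real.norm_of_nonneg (mul_nonneg hγ0 (sub_nonneg.2 hγ1.le))]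
  have : (1 - γ) * ‖μ‖ ≤ (1 - γ) * γ := by linarith
  exact le_of_mul_le_mul_left this (sub_pos.2 hγ1)

end RowStochastic

end Matrix

theorem stmt_10_general (n : ℕ) (hn : 1 ≤ n)
    (F : Matrix (Fin n) (Fin n) ℝ)
    (hFnonneg : ∀ i j, 0 ≤ F i j)
    (hFrow : ∀ i, ∑ j, F i j = 1)
    (b : Fin n → ℝ)
    (γ : ℝ) (hγ0 : 0 ≤ γ) (hγ1 : γ < 1) (hbγ : ∀ j, b j = γ)
    (K : Matrix (Fin n) (Fin n) ℝ)
    (hK : ∀ i j, K i j = F i j * b j)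
    (hInv : IsUnit (1 - K))
    (S : Matrix (Fin n) (Fin n) ℝ)
    (hS : S = (1 - K)⁻¹ * F)
    (R : Matrix (Fin n) (Fin n) ℝ)
    (hR : ∀ i j, R i j = (1 - b i) * S i j * b j) :
    R.mulVec (fun _ => 1) = (fun _ => γ) ∧
    (γ : ℂ) ∈ spectrum ℂ (R.map Complex.ofReal) ∧
    (∀ μ : ℂ, μ ∈ spectrum ℂ (R.map Complex.ofReal) → ‖μ‖ ≤ γ) ∧
    IsGreatest ((fun z : ℂ => ‖z‖) '' spectrum ℂ (R.map Complex.ofReal)) γ := by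
  have hF : F ∈ rowStochastic ℝ (Fin n) := mem_rowStochastic_iff_sum.2 ⟨hFnonneg, hFrow⟩
  have hKF : K = γ • F := by ext i j; simp [hK, hbγ, mul_comm]
  have hRS : R = (γ * (1 - γ)) • S := by
    ext i j; simp only [hR, hbγ, Matrix.smul_apply, smul_eq_mul]; ring
  have hKS : (1 - K) * S = F := by
    rw [hS, ← Matrix.mul_assoc, Matrix.mul_nonsing_inv _ ((isUnit_iff_isUnit_det _).1 hInv),
      Matrix.one_mul]
  have hFR : (1 - γ • F) * R = (γ * (1 - γ)) • F := by rw [hRS, mul_smul_comm, ← hKF, hKS]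
  have hrow : R *ᵥ 1 = γ • 1 :=
    mulVec_one_of_one_sub_smul_mul_eq hFR (one_vecMul_of_mem_rowStochastic hF) (hKF ▸ hInv)
  have : Nonempty (Fin n) := ⟨⟨0, hn⟩⟩
  have hγR := ofReal_mem_spectrum_map_of_mulVec_one hrow
  have hbound : ∀ μ ∈ spectrum ℂ (R.map Complex.ofReal), ‖μ‖ ≤ γ := fun _ hμ =>
    norm_le_of_mem_spectrum_of_one_sub_smul_mul_eq hF hγ0 hγ1 hFR hμ
  refine ⟨hrow.trans (funext fun _ => mul_one γ), hγR, hbound,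
    ⟨γ, hγR, Complex.norm_of_nonneg hγ0⟩, ?_⟩
  rintro _ ⟨μ, hμ, rfl⟩
  exact hbound μ hμ

/-- Suppose `b j = γ` for all `j`, where `γ ∈ [0,1)`. Then every
row sum of `R` equals `γ` (i.e. `R.mulVec 1 = γ·1`), `γ` is a complex
eigenvalue of `R`, and every complex eigenvalue `μ` of `R` satisfies `|μ| ≤ γ`;
hence the spectral radius of `R` equals `γ`. -/
theorem stmt_10 (n : ℕ) (hn : 1 ≤ n)
    (F : Matrix (Fin n) (Fin n) ℝ)
    (hFnonneg : ∀ i j, 0 ≤ F i j)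
    (hFrow : ∀ i, ∑ j, F i j = 1)
    (b : Fin n → ℝ) (hb0 : ∀ j, 0 ≤ b j) (hb1 : ∀ j, b j < 1)
    (γ : ℝ) (hγ0 : 0 ≤ γ) (hγ1 : γ < 1) (hbγ : ∀ j, b j = γ)
    (K : Matrix (Fin n) (Fin n) ℝ)
    (hK : ∀ i j, K i j = F i j * b j)
    (hInv : IsUnit (1 - K))
    (S : Matrix (Fin n) (Fin n) ℝ)
    (hS : S = (1 - K)⁻¹ * F)
    (A R : Matrix (Fin n) (Fin n) ℝ)
    (hA : ∀ i j, A i j = (1 - b i) * S i j * (1 - b j))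
    (hR : ∀ i j, R i j = (1 - b i) * S i j * b j) :
    R.mulVec (fun _ => 1) = (fun _ => γ) ∧
    (γ : ℂ) ∈ spectrum ℂ (R.map Complex.ofReal) ∧
    (∀ μ : ℂ, μ ∈ spectrum ℂ (R.map Complex.ofReal) → ‖μ‖ ≤ γ) ∧
    IsGreatest ((fun z : ℂ => ‖z‖) '' spectrum ℂ (R.map Complex.ofReal)) γ :=
  stmt_10_general n hn F hFnonneg hFrow b γ hγ0 hγ1 hbγ K hK hInv S hS R hR
end

section
/- Suppose b j = γ for all j, where γ ∈ [0,1). Then every row sum of A equals 1 − γ (i.e. A.mulVec 1 = (1−γ)·1), 1 − γ is a complex eigenvalue of A, and every complex eigenvalue μ of A satisfies |μ| ≤ 1 − γ; hence the spectral radius of A equals 1 − γ. -/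
/-!
With `b ≡ γ` we have `K = γ • F`, and `S = (1 - K)⁻¹ * F` satisfies `S = F + K * S`. A minimum
principle for this fixed-point equation (a column of `S` cannot have a negative minimum, because
`K ≥ 0` has row sums `< 1`) shows `S ≥ 0`, and applying `(1 - K)⁻¹` to `(1 - K) *ᵥ 1 = (1 - γ) • 1`
gives `S *ᵥ 1 = (1 - γ)⁻¹ • 1`. Hence `A = (1 - γ) ^ 2 • S` is a nonnegative matrix all of whose
row sums are `1 - γ`: the constant vector is an eigenvector for `1 - γ`, and Gershgorin's theorem
bounds every eigenvalue by the largest absolute row sum.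
-/

open Matrix

namespace Matrix

variable {ι 𝕜 : Type*} [Fintype ι]

theorem nonneg_of_eq_add_mulVec {K : Matrix ι ι ℝ} {u v : ι → ℝ} (hK : ∀ i j, 0 ≤ K i j)
    (hKrow : ∀ i, ∑ j, K i j < 1) (hu : 0 ≤ u) (hv : v = u + K *ᵥ v) : 0 ≤ v := by
  intro k
  have : Nonempty ι := ⟨k⟩
  obtain ⟨i, hi⟩ := Finite.exists_min v
  have hvi : (∑ j, K i j) * v i ≤ v i :=
    calc (∑ j, K i j) * v i = ∑ j, K i j * v i := Finset.sum_mul _ _ _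
      _ ≤ ∑ j, K i j * v j :=
        Finset.sum_le_sum fun j _ => mul_le_mul_of_nonneg_left (hi j) (hK i j)
      _ = (K *ᵥ v) i := rfl
      _ ≤ v i := by
        conv_rhs => rw [hv]
        simpa using hu i
  have hvi_nonneg : 0 ≤ v i := by nlinarith [hKrow i]
  exact hvi_nonneg.trans (hi k)

theorem nonneg_of_eq_add_mul {K F S : Matrix ι ι ℝ} (hK : ∀ i j, 0 ≤ K i j)
    (hKrow : ∀ i, ∑ j, K i j < 1) (hF : ∀ i j, 0 ≤ F i j) (hS : S = F + K * S) :
    ∀ i j, 0 ≤ S i j := by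
  intro i j
  refine nonneg_of_eq_add_mulVec (u := fun k => F k j) (v := fun k => S k j) hK hKrow
    (fun k => hF k j) ?_ i
  funext k
  simpa [mul_apply, mulVec, dotProduct] using congrFun (congrFun hS k) j

variable [DecidableEq ι]

theorem inv_one_sub_mul_nonneg {K F : Matrix ι ι ℝ} (hK : ∀ i j, 0 ≤ K i j)
    (hKrow : ∀ i, ∑ j, K i j < 1) (hInv : IsUnit (1 - K)) (hF : ∀ i j, 0 ≤ F i j) :
    ∀ i j, 0 ≤ ((1 - K)⁻¹ * F) i j := by
  refine nonneg_of_eq_add_mul hK hKrow hF ?_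
  have hdet : IsUnit (1 - K).det := (isUnit_iff_isUnit_det _).mp hInv
  have h : (1 - K) * ((1 - K)⁻¹ * F) = F := by
    rw [← Matrix.mul_assoc, mul_nonsing_inv _ hdet, Matrix.one_mul]
  rw [Matrix.sub_mul, Matrix.one_mul, sub_eq_iff_eq_add] at h
  exact h

theorem inv_one_sub_mul_mulVec_one [Field 𝕜] {K F : Matrix ι ι 𝕜} {γ : 𝕜} (hγ : γ ≠ 1)
    (hInv : IsUnit (1 - K)) (hKrow : ∀ i, ∑ j, K i j = γ) (hFrow : ∀ i, ∑ j, F i j = 1) :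
    ((1 - K)⁻¹ * F) *ᵥ 1 = (1 - γ)⁻¹ • 1 := by
  have hF1 : F *ᵥ 1 = 1 := funext fun i => by simp [mulVec, dotProduct, hFrow]
  have hK1 : K *ᵥ 1 = γ • 1 := funext fun i => by simp [mulVec, dotProduct, hKrow]
  have hsub1 : (1 - K) *ᵥ 1 = (1 - γ) • 1 := by
    rw [sub_mulVec, one_mulVec, hK1, sub_smul, one_smul]
  have hsolve : (1 - K) *ᵥ ((1 - γ)⁻¹ • 1) = 1 := by
    rw [mulVec_smul, hsub1, smul_smul, inv_mul_cancel₀ (sub_ne_zero.mpr hγ.symm), one_smul]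
  have := hInv.invertible
  rw [← mulVec_mulVec, hF1, inv_mulVec_eq_vec hsolve.symm]

theorem mem_spectrum_of_mulVec_eq_smul [Field 𝕜] {M : Matrix ι ι 𝕜} {v : ι → 𝕜} {μ : 𝕜}
    (hv : v ≠ 0) (h : M *ᵥ v = μ • v) : μ ∈ spectrum 𝕜 M := by
  rw [← spectrum_toLin']
  exact (Module.End.hasEigenvalue_of_hasEigenvector
    ⟨Module.End.mem_eigenspace_iff.mpr (by simpa using h), hv⟩).mem_spectrum

theorem norm_le_of_mem_spectrum [NormedField 𝕜] {M : Matrix ι ι 𝕜} {r : ℝ}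
    (hM : ∀ i, ∑ j, ‖M i j‖ ≤ r) {μ : 𝕜} (hμ : μ ∈ spectrum 𝕜 M) : ‖μ‖ ≤ r := by
  rw [← spectrum_toLin', ← Module.End.hasEigenvalue_iff_mem_spectrum] at hμ
  obtain ⟨k, hk⟩ := eigenvalue_mem_ball hμ
  calc ‖μ‖ ≤ ‖M k k‖ + ∑ j ∈ Finset.univ.erase k, ‖M k j‖ := norm_le_of_mem_closedBall hk
    _ = ∑ j, ‖M k j‖ := Finset.add_sum_erase _ (fun j => ‖M k j‖) (Finset.mem_univ k)
    _ ≤ r := hM k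

theorem ofReal_mem_spectrum_map_ofReal [Nonempty ι] {A : Matrix ι ι ℝ} {r : ℝ}
    (hrow : ∀ i, ∑ j, A i j = r) : (r : ℂ) ∈ spectrum ℂ (A.map Complex.ofReal) := by
  refine mem_spectrum_of_mulVec_eq_smul (v := 1) one_ne_zero (funext fun i => ?_)
  simp [mulVec, dotProduct, ← Complex.ofReal_sum, hrow]

theorem norm_le_of_mem_spectrum_map_ofReal {A : Matrix ι ι ℝ} {r : ℝ} (hA : ∀ i j, 0 ≤ A i j)
    (hrow : ∀ i, ∑ j, A i j ≤ r) {μ : ℂ} (hμ : μ ∈ spectrum ℂ (A.map Complex.ofReal)) :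
    ‖μ‖ ≤ r :=
  norm_le_of_mem_spectrum (fun i => by simpa [abs_of_nonneg (hA i _)] using hrow i) hμ

end Matrix

theorem stmt_11_general (n : ℕ) (hn : 1 ≤ n)
    (F : Matrix (Fin n) (Fin n) ℝ)
    (hFnonneg : ∀ i j, 0 ≤ F i j)
    (hFrow : ∀ i, ∑ j, F i j = 1)
    (b : Fin n → ℝ)
    (γ : ℝ) (hγ0 : 0 ≤ γ) (hγ1 : γ < 1) (hbγ : ∀ j, b j = γ)
    (K : Matrix (Fin n) (Fin n) ℝ)
    (hK : ∀ i j, K i j = F i j * b j)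
    (hInv : IsUnit (1 - K))
    (S : Matrix (Fin n) (Fin n) ℝ)
    (hS : S = (1 - K)⁻¹ * F)
    (A : Matrix (Fin n) (Fin n) ℝ)
    (hA : ∀ i j, A i j = (1 - b i) * S i j * (1 - b j)) :
    A.mulVec (fun _ => 1) = (fun _ => 1 - γ) ∧
    ((1 - γ : ℝ) : ℂ) ∈ spectrum ℂ (A.map Complex.ofReal) ∧
    (∀ μ : ℂ, μ ∈ spectrum ℂ (A.map Complex.ofReal) → ‖μ‖ ≤ 1 - γ) ∧
    IsGreatest ((fun z : ℂ => ‖z‖) '' spectrum ℂ (A.map Complex.ofReal)) (1 - γ) := by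
  have hKnn : ∀ i j, 0 ≤ K i j := fun i j => by
    rw [hK, hbγ]; exact mul_nonneg (hFnonneg i j) hγ0
  have hKrow : ∀ i, ∑ j, K i j = γ := fun i => by
    simp only [hK, hbγ, ← Finset.sum_mul, hFrow, one_mul]
  have hSnn : ∀ i j, 0 ≤ S i j :=
    hS ▸ inv_one_sub_mul_nonneg hKnn (fun i => (hKrow i).trans_lt hγ1) hInv hFnonneg
  have hS1 : S *ᵥ 1 = (1 - γ)⁻¹ • 1 := hS ▸ inv_one_sub_mul_mulVec_one hγ1.ne hInv hKrow hFrow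
  have hAS : A = (1 - γ) ^ 2 • S := by
    ext i j
    simp only [hA, hbγ, Matrix.smul_apply, smul_eq_mul]
    ring
  have hA1 : A *ᵥ 1 = (1 - γ) • 1 := by
    rw [hAS, smul_mulVec, hS1, smul_smul, pow_two, mul_assoc,
      mul_inv_cancel₀ (sub_ne_zero.mpr hγ1.ne'), mul_one]
  have hArow : ∀ i, ∑ j, A i j = 1 - γ := fun i => by
    simpa [mulVec, dotProduct] using congrFun hA1 i
  have hAnn : ∀ i j, 0 ≤ A i j := fun i j => by
    rw [hAS]; exact mul_nonneg (by positivity) (hSnn i j)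
  have : NeZero n := ⟨by omega⟩
  have hmem := ofReal_mem_spectrum_map_ofReal hArow
  have hbound μ (hμ : μ ∈ spectrum ℂ (A.map Complex.ofReal)) : ‖μ‖ ≤ 1 - γ :=
    norm_le_of_mem_spectrum_map_ofReal hAnn (fun i => (hArow i).le) hμ
  refine ⟨funext fun i => by simp [mulVec, dotProduct, hArow], hmem, hbound,
    ⟨⟨_, hmem, ?_⟩, ?_⟩⟩
  · exact (Complex.norm_real _).trans (Real.norm_of_nonneg (sub_nonneg.mpr hγ1.le))
  · rintro _ ⟨μ, hμ, rfl⟩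
    exact hbound μ hμ

/-- Suppose `b j = γ` for all `j`, where `γ ∈ [0,1)`. Then every
row sum of `A` equals `1 − γ` (i.e. `A.mulVec 1 = (1−γ)·1`), `1 − γ` is a
complex eigenvalue of `A`, and every complex eigenvalue `μ` of `A` satisfies
`|μ| ≤ 1 − γ`; hence the spectral radius of `A` equals `1 − γ`. -/
theorem stmt_11 (n : ℕ) (hn : 1 ≤ n)
    (F : Matrix (Fin n) (Fin n) ℝ)
    (hFnonneg : ∀ i j, 0 ≤ F i j)
    (hFrow : ∀ i, ∑ j, F i j = 1)
    (b : Fin n → ℝ) (hb0 : ∀ j, 0 ≤ b j) (hb1 : ∀ j, b j < 1)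
    (γ : ℝ) (hγ0 : 0 ≤ γ) (hγ1 : γ < 1) (hbγ : ∀ j, b j = γ)
    (K : Matrix (Fin n) (Fin n) ℝ)
    (hK : ∀ i j, K i j = F i j * b j)
    (hInv : IsUnit (1 - K))
    (S : Matrix (Fin n) (Fin n) ℝ)
    (hS : S = (1 - K)⁻¹ * F)
    (A R : Matrix (Fin n) (Fin n) ℝ)
    (hA : ∀ i j, A i j = (1 - b i) * S i j * (1 - b j))
    (hR : ∀ i j, R i j = (1 - b i) * S i j * b j) :
    A.mulVec (fun _ => 1) = (fun _ => 1 - γ) ∧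
    ((1 - γ : ℝ) : ℂ) ∈ spectrum ℂ (A.map Complex.ofReal) ∧
    (∀ μ : ℂ, μ ∈ spectrum ℂ (A.map Complex.ofReal) → ‖μ‖ ≤ 1 - γ) ∧
    IsGreatest ((fun z : ℂ => ‖z‖) '' spectrum ℂ (A.map Complex.ofReal)) (1 - γ) :=
  stmt_11_general n hn F hFnonneg hFrow b γ hγ0 hγ1 hbγ K hK hInv S hS A hA
end

section
/- Suppose b j = γ for all j, where γ ∈ [0,1). Let ρ(X) denote the maximum modulus of the complex eigenvalues of a real square matrix X. Then ρ(A) + ρ(R) = ρ(A + R) = 1, namely ρ(A) = 1 − γ, ρ(R) = γ, and ρ(A + R) = 1, and in each case the maximum modulus is attained at a real eigenvalue. -/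
/-!
Since every `b j` equals `γ`, the matrix `K` is `γ • F`, so `(1 - K) 𝟙 = (1 - γ) 𝟙` and
`S∞ 𝟙 = (1 - K)⁻¹ F 𝟙 = (1 - γ)⁻¹ 𝟙`. Hence `A = (1 - γ)² S∞`, `R = γ (1 - γ) S∞` and
`A + R = (1 - γ) S∞` have constant row sums `1 - γ`, `γ` and `1`. They are also nonnegative,
because `S∞` is: `K` is nonnegative with row sums `γ < 1`, so `1 - K` satisfies the discrete
minimum principle `(1 - K) x ≥ 0 → x ≥ 0`, and `(1 - K) S∞ = F ≥ 0`. A nonnegative matrix with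
constant row sums `r` has `r` as an eigenvalue (eigenvector `𝟙`), and `r` is its
`ℓ^∞`-operator norm, which bounds its spectrum.
-/

open Matrix

attribute [local instance] Matrix.linftyOpNormedRing Matrix.linftyOpNormedAlgebra

section Spectrum

variable {ι : Type*} [Fintype ι] [DecidableEq ι] [Nonempty ι] {M : Matrix ι ι ℝ} {r : ℝ}

theorem Matrix.ofReal_mem_spectrum_map_of_rowSum_eq (hrow : ∀ i, ∑ j, M i j = r) :
    (r : ℂ) ∈ spectrum ℂ (M.map Complex.ofReal) := by
  rw [← Matrix.spectrum_toLin', ← Module.End.hasEigenvalue_iff_mem_spectrum]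
  refine Module.End.hasEigenvalue_of_hasEigenvector (x := 1) ⟨?_, one_ne_zero⟩
  rw [Module.End.mem_eigenspace_iff, toLin'_apply]
  ext i
  simp [mulVec, dotProduct, ← Complex.ofReal_sum, hrow i]

theorem Matrix.norm_le_of_mem_spectrum_map_of_rowSum_le (hM : ∀ i j, 0 ≤ M i j)
    (hrow : ∀ i, ∑ j, M i j ≤ r) {z : ℂ} (hz : z ∈ spectrum ℂ (M.map Complex.ofReal)) :
    ‖z‖ ≤ r := by
  have hr : 0 ≤ r := (Finset.sum_nonneg fun j _ => hM (Classical.arbitrary ι) j).trans (hrow _)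
  have hnorm : ‖M.map Complex.ofReal‖₊ ≤ r.toNNReal := by
    rw [linfty_opNNNorm_def]
    refine Finset.sup_le fun i _ => NNReal.coe_le_coe.mp ?_
    simpa [abs_of_nonneg (hM i _), hr] using hrow i
  exact (spectrum.norm_le_norm_of_mem hz).trans
    ((NNReal.coe_le_coe.mpr hnorm).trans_eq (Real.coe_toNNReal r hr))

theorem Matrix.isGreatest_norm_spectrum_map_of_rowSum_eq (hM : ∀ i j, 0 ≤ M i j)
    (hrow : ∀ i, ∑ j, M i j = r) :
    IsGreatest ((fun z : ℂ => ‖z‖) '' spectrum ℂ (M.map Complex.ofReal)) r ∧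
      (r : ℂ) ∈ spectrum ℂ (M.map Complex.ofReal) := by
  have hmem := ofReal_mem_spectrum_map_of_rowSum_eq hrow
  have hr : 0 ≤ r := hrow (Classical.arbitrary ι) ▸ Finset.sum_nonneg fun j _ => hM _ j
  refine ⟨⟨⟨r, hmem, by simp [abs_of_nonneg hr]⟩, ?_⟩, hmem⟩
  rintro _ ⟨z, hz, rfl⟩
  exact norm_le_of_mem_spectrum_map_of_rowSum_le hM (fun i => (hrow i).le) hz

end Spectrum

section Resolvent

variable {ι : Type*} [Fintype ι] [DecidableEq ι]

theorem Matrix.nonneg_of_one_sub_mulVec_nonneg_s12 {K : Matrix ι ι ℝ} (hK : ∀ i j, 0 ≤ K i j)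
    (hrow : ∀ i, ∑ j, K i j < 1) {x : ι → ℝ} (hx : ∀ i, 0 ≤ ((1 - K) *ᵥ x) i) (i : ι) :
    0 ≤ x i := by
  obtain ⟨i₀, -, hmin⟩ := Finset.exists_min_image Finset.univ x ⟨i, Finset.mem_univ i⟩
  by_contra! hneg
  have hi₀ : x i₀ < 0 := (hmin i (Finset.mem_univ _)).trans_lt hneg
  have hKx : (∑ j, K i₀ j) * x i₀ ≤ (K *ᵥ x) i₀ := by
    rw [Finset.sum_mul]
    exact Finset.sum_le_sum fun j _ =>
      mul_le_mul_of_nonneg_left (hmin j (Finset.mem_univ _)) (hK i₀ j)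
  have h := hx i₀
  rw [sub_mulVec, one_mulVec, Pi.sub_apply] at h
  nlinarith [hrow i₀]

variable {F : Matrix ι ι ℝ} {γ : ℝ}

theorem Matrix.inv_one_sub_smul_mul_nonneg (hF : ∀ i j, 0 ≤ F i j)
    (hFrow : ∀ i, ∑ j, F i j = 1) (hγ0 : 0 ≤ γ) (hγ1 : γ < 1) (hu : IsUnit (1 - γ • F))
    (i j : ι) : 0 ≤ ((1 - γ • F)⁻¹ * F) i j := by
  have hcol (k : ι) : ((1 - γ • F) *ᵥ fun l => ((1 - γ • F)⁻¹ * F) l j) k = F k j := by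
    rw [mulVec, dotProduct, ← mul_apply, ← Matrix.mul_assoc,
      mul_nonsing_inv _ ((isUnit_iff_isUnit_det _).mp hu), Matrix.one_mul]
  refine nonneg_of_one_sub_mulVec_nonneg_s12 (x := fun l => ((1 - γ • F)⁻¹ * F) l j)
    (fun i j => mul_nonneg hγ0 (hF i j)) (fun i => ?_) (fun k => (hcol k).symm ▸ hF k j) i
  simpa [← Finset.mul_sum, hFrow i] using hγ1

theorem Matrix.rowSum_inv_one_sub_smul_mul (hFrow : ∀ i, ∑ j, F i j = 1) (hγ1 : γ ≠ 1)
    (hu : IsUnit (1 - γ • F)) (i : ι) :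
    ∑ j, ((1 - γ • F)⁻¹ * F) i j = (1 - γ)⁻¹ := by
  have hF1 : F *ᵥ 1 = 1 := by
    ext i
    simp [mulVec, dotProduct, hFrow i]
  have h1 : (1 - γ • F) *ᵥ 1 = (1 - γ) • (1 : ι → ℝ) := by
    rw [sub_mulVec, one_mulVec, smul_mulVec, hF1, sub_smul, one_smul]
  have h2 : (1 - γ) • ((1 - γ • F)⁻¹ *ᵥ 1) = 1 := by
    rw [← mulVec_smul, ← h1, mulVec_mulVec, nonsing_inv_mul _ ((isUnit_iff_isUnit_det _).mp hu),
      one_mulVec]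
  have h3 : ((1 - γ • F)⁻¹ * F) *ᵥ 1 = (1 - γ)⁻¹ • 1 := by
    rw [← mulVec_mulVec, hF1]
    exact (eq_inv_smul_iff₀ (sub_ne_zero.mpr hγ1.symm)).mpr h2
  simpa [mulVec, dotProduct] using congrFun h3 i

end Resolvent

theorem stmt_12_general (n : ℕ) (hn : 1 ≤ n)
    (F : Matrix (Fin n) (Fin n) ℝ)
    (hFnonneg : ∀ i j, 0 ≤ F i j)
    (hFrow : ∀ i, ∑ j, F i j = 1)
    (b : Fin n → ℝ)
    (γ : ℝ) (hγ0 : 0 ≤ γ) (hγ1 : γ < 1) (hbγ : ∀ j, b j = γ)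
    (K : Matrix (Fin n) (Fin n) ℝ)
    (hK : ∀ i j, K i j = F i j * b j)
    (hInv : IsUnit (1 - K))
    (S : Matrix (Fin n) (Fin n) ℝ)
    (hS : S = (1 - K)⁻¹ * F)
    (A R : Matrix (Fin n) (Fin n) ℝ)
    (hA : ∀ i j, A i j = (1 - b i) * S i j * (1 - b j))
    (hR : ∀ i j, R i j = (1 - b i) * S i j * b j) :
    (IsGreatest ((fun z : ℂ => ‖z‖) '' spectrum ℂ (A.map Complex.ofReal)) (1 - γ) ∧
      ((1 - γ : ℝ) : ℂ) ∈ spectrum ℂ (A.map Complex.ofReal)) ∧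
    (IsGreatest ((fun z : ℂ => ‖z‖) '' spectrum ℂ (R.map Complex.ofReal)) γ ∧
      (γ : ℂ) ∈ spectrum ℂ (R.map Complex.ofReal)) ∧
    (IsGreatest ((fun z : ℂ => ‖z‖) '' spectrum ℂ ((A + R).map Complex.ofReal)) 1 ∧
      (1 : ℂ) ∈ spectrum ℂ ((A + R).map Complex.ofReal)) ∧
    (1 - γ) + γ = 1 := by
  have : Nonempty (Fin n) := ⟨⟨0, hn⟩⟩
  obtain rfl : K = γ • F := by ext i j; rw [hK, hbγ, Matrix.smul_apply, smul_eq_mul, mul_comm]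
  subst hS
  have hγ : 0 < 1 - γ := sub_pos.mpr hγ1
  have hSnonneg := inv_one_sub_smul_mul_nonneg hFnonneg hFrow hγ0 hγ1 hInv
  have hSrow := rowSum_inv_one_sub_smul_mul hFrow hγ1.ne hInv
  have hArow (i : Fin n) : ∑ j, A i j = 1 - γ := by
    simp_rw [hA, hbγ, ← Finset.sum_mul, ← Finset.mul_sum, hSrow]
    field_simp
  have hRrow (i : Fin n) : ∑ j, R i j = γ := by
    simp_rw [hR, hbγ, ← Finset.sum_mul, ← Finset.mul_sum, hSrow]
    field_simp
  have hAnonneg (i j : Fin n) : 0 ≤ A i j := by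
    rw [hA, hbγ, hbγ]; exact mul_nonneg (mul_nonneg hγ.le (hSnonneg i j)) hγ.le
  have hRnonneg (i j : Fin n) : 0 ≤ R i j := by
    rw [hR, hbγ, hbγ]; exact mul_nonneg (mul_nonneg hγ.le (hSnonneg i j)) hγ0
  refine ⟨isGreatest_norm_spectrum_map_of_rowSum_eq hAnonneg hArow,
    isGreatest_norm_spectrum_map_of_rowSum_eq hRnonneg hRrow, ?_, by ring⟩
  exact_mod_cast isGreatest_norm_spectrum_map_of_rowSum_eq (M := A + R) (r := 1)
    (fun i j => add_nonneg (hAnonneg i j) (hRnonneg i j))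
    (fun i => by simp only [Matrix.add_apply, Finset.sum_add_distrib, hArow, hRrow, sub_add_cancel])

/-- Suppose `b j = γ` for all `j`, where `γ ∈ [0,1)`. Let `ρ(X)`
denote the maximum modulus of the complex eigenvalues of `X`. Then
`ρ(A) + ρ(R) = ρ(A + R) = 1`, namely `ρ(A) = 1 − γ`, `ρ(R) = γ`, and
`ρ(A + R) = 1`, and in each case the maximum modulus is attained at a real
eigenvalue. -/
theorem stmt_12 (n : ℕ) (hn : 1 ≤ n)
    (F : Matrix (Fin n) (Fin n) ℝ)
    (hFnonneg : ∀ i j, 0 ≤ F i j)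
    (hFrow : ∀ i, ∑ j, F i j = 1)
    (b : Fin n → ℝ) (hb0 : ∀ j, 0 ≤ b j) (hb1 : ∀ j, b j < 1)
    (γ : ℝ) (hγ0 : 0 ≤ γ) (hγ1 : γ < 1) (hbγ : ∀ j, b j = γ)
    (K : Matrix (Fin n) (Fin n) ℝ)
    (hK : ∀ i j, K i j = F i j * b j)
    (hInv : IsUnit (1 - K))
    (S : Matrix (Fin n) (Fin n) ℝ)
    (hS : S = (1 - K)⁻¹ * F)
    (A R : Matrix (Fin n) (Fin n) ℝ)
    (hA : ∀ i j, A i j = (1 - b i) * S i j * (1 - b j))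
    (hR : ∀ i j, R i j = (1 - b i) * S i j * b j) :
    (IsGreatest ((fun z : ℂ => ‖z‖) '' spectrum ℂ (A.map Complex.ofReal)) (1 - γ) ∧
      ((1 - γ : ℝ) : ℂ) ∈ spectrum ℂ (A.map Complex.ofReal)) ∧
    (IsGreatest ((fun z : ℂ => ‖z‖) '' spectrum ℂ (R.map Complex.ofReal)) γ ∧
      (γ : ℂ) ∈ spectrum ℂ (R.map Complex.ofReal)) ∧
    (IsGreatest ((fun z : ℂ => ‖z‖) '' spectrum ℂ ((A + R).map Complex.ofReal)) 1 ∧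
      (1 : ℂ) ∈ spectrum ℂ ((A + R).map Complex.ofReal)) ∧
    (1 - γ) + γ = 1 :=
  stmt_12_general n hn F hFnonneg hFrow b γ hγ0 hγ1 hbγ K hK hInv S hS A R hA hR
end

section
/- Suppose F is irreducible. Let J be a nonempty subset of the index set and let M be the matrix whose i-th row equals the i-th row of D when i ∈ J and equals the i-th row of C when i ∉ J. Then M is invertible (det M ≠ 0). -/
open Matrix

/-- Suppose `F` is irreducible. Let `J` be a nonempty subset of
the index set and let `M` be the matrix whose `i`-th row equals the `i`-th row
of `D` when `i ∈ J` and equals the `i`-th row of `C` when `i ∉ J`. Then `M` is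
invertible (`det M ≠ 0`). -/
theorem stmt_16 (n : ℕ) (hn : 1 ≤ n)
    (F : Matrix (Fin n) (Fin n) ℝ)
    (hFnonneg : ∀ i j, 0 ≤ F i j)
    (hFrow : ∀ i, ∑ j, F i j = 1)
    (b : Fin n → ℝ) (hb0 : ∀ j, 0 ≤ b j) (hb1 : ∀ j, b j < 1)
    (K : Matrix (Fin n) (Fin n) ℝ)
    (hK : ∀ i j, K i j = F i j * b j)
    (hInv : IsUnit (1 - K))
    (S : Matrix (Fin n) (Fin n) ℝ)
    (hS : S = (1 - K)⁻¹ * F)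
    (A R : Matrix (Fin n) (Fin n) ℝ)
    (hA : ∀ i j, A i j = (1 - b i) * S i j * (1 - b j))
    (hR : ∀ i j, R i j = (1 - b i) * S i j * b j)
    (C D : Matrix (Fin n) (Fin n) ℝ)
    (hC : C = 1 - A.transpose - R.transpose)
    (hD : D = 1 - R.transpose)
    (hFirr : ∀ i j, ∃ k : ℕ, 1 ≤ k ∧ 0 < (F ^ k) i j)
    (J : Finset (Fin n)) (hJ : J.Nonempty)
    (M : Matrix (Fin n) (Fin n) ℝ)
    (hM : ∀ i, M i = if i ∈ J then D i else C i) :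
    M.det ≠ 0 := by
  intro hdet
  have hdetK : IsUnit (1 - K).det := (Matrix.isUnit_iff_isUnit_det _).mp hInv
  have hbpos : ∀ i, 0 < 1 - b i := fun i => by linarith [hb1 i]
  have hKS : (1 - K) * S = F := by
    rw [hS, ← Matrix.mul_assoc, Matrix.mul_nonsing_inv _ hdetK, Matrix.one_mul]
  have hKS2 : S - K * S = F := by rw [sub_mul, Matrix.one_mul] at hKS; exact hKS
  have hSrec : ∀ i j, S i j = F i j + ∑ l, K i l * S l j := by
    intro i j
    have h := congrFun (congrFun hKS2 i) j
    simp only [Matrix.sub_apply, Matrix.mul_apply] at h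
    linarith
  have hKnn : ∀ i l, 0 ≤ K i l := fun i l => by
    rw [hK]; exact mul_nonneg (hFnonneg i l) (hb0 l)
  have hKrow : ∀ i, ∑ l, K i l < 1 := by
    intro i
    have h1 : ∑ l, K i l < ∑ l, F i l := by
      apply Finset.sum_lt_sum
      · intro l _; rw [hK]; nlinarith [hFnonneg i l, hb0 l, hb1 l]
      · obtain ⟨l, hl⟩ : ∃ l, 0 < F i l := by
          by_contra h; push_neg at h
          have h2 : ∑ l, F i l ≤ 0 := Finset.sum_nonpos (fun l _ => h l)
          rw [hFrow i] at h2; linarith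
        exact ⟨l, Finset.mem_univ l, by rw [hK]; nlinarith [hb1 l, hb0 l]⟩
    rw [hFrow i] at h1; exact h1
  have hSnn : ∀ i j, 0 ≤ S i j := by
    intro i j
    by_contra hneg
    push_neg at hneg
    obtain ⟨i0, -, hi0⟩ := Finset.exists_min_image Finset.univ (fun i => S i j)
      ⟨i, Finset.mem_univ i⟩
    have ht : S i0 j < 0 := lt_of_le_of_lt (hi0 i (Finset.mem_univ i)) hneg
    have h1 : F i0 j + (∑ l, K i0 l) * S i0 j ≤ S i0 j := by
      have hs := hSrec i0 j
      have h2 : ∀ l ∈ Finset.univ, K i0 l * S i0 j ≤ K i0 l * S l j := fun l _ =>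
        mul_le_mul_of_nonneg_left (hi0 l (Finset.mem_univ l)) (hKnn i0 l)
      have h3 : (∑ l, K i0 l) * S i0 j ≤ ∑ l, K i0 l * S l j := by
        rw [Finset.sum_mul]; exact Finset.sum_le_sum h2
      linarith
    have hκ : (0:ℝ) ≤ ∑ l, K i0 l := Finset.sum_nonneg fun l _ => hKnn i0 l
    nlinarith [hKrow i0, hFnonneg i0 j]
  have hSF : ∀ i j, F i j ≤ S i j := by
    intro i j
    have h0 : 0 ≤ ∑ l, K i l * S l j :=
      Finset.sum_nonneg fun l _ => mul_nonneg (hKnn i l) (hSnn l j)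
    have := hSrec i j
    linarith
  have hpow : ∀ k i j, 0 ≤ (F ^ k) i j ∧ (F ^ k) i j ≤ (S ^ k) i j := by
    intro k
    induction k with
    | zero =>
      intro i j
      simp only [pow_zero, Matrix.one_apply]
      constructor
      · split <;> norm_num
      · exact le_refl _
    | succ k ih =>
      intro i j
      rw [pow_succ, pow_succ]
      simp only [Matrix.mul_apply]
      constructor
      · exact Finset.sum_nonneg fun l _ => mul_nonneg (ih i l).1 (hFnonneg l j)
      · apply Finset.sum_le_sum
        intro l _
        exact mul_le_mul (ih i l).2 (hSF l j) (hFnonneg l j)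
          ((ih i l).1.trans (ih i l).2)
  have hSpnn : ∀ k i j, 0 ≤ (S ^ k) i j := fun k i j =>
    (hpow k i j).1.trans (hpow k i j).2
  have hrow : ∀ j, ∑ i, S j i * (1 - b i) = 1 := by
    have hF1 : F *ᵥ (fun i => 1 - b i) = (1 - K) *ᵥ (fun _ => (1:ℝ)) := by
      funext j
      simp only [Matrix.mulVec, dotProduct, Matrix.sub_apply, Matrix.one_apply,
        mul_sub, mul_one]
      rw [Finset.sum_sub_distrib, Finset.sum_sub_distrib, hFrow j]
      congr 1
      · congr 1
        simp
      · exact Finset.sum_congr rfl fun i _ => (hK j i).symm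
    have h1 : S *ᵥ (fun i => 1 - b i) = fun _ => (1:ℝ) := by
      rw [hS, ← Matrix.mulVec_mulVec, hF1, Matrix.mulVec_mulVec,
        Matrix.nonsing_inv_mul _ hdetK, Matrix.one_mulVec]
    intro j
    have h2 := congrFun h1 j
    simpa [Matrix.mulVec, dotProduct] using h2
  -- main argument
  obtain ⟨v, hv0, hvM⟩ := (Matrix.exists_vecMul_eq_zero_iff).mpr hdet
  set c : Fin n → ℝ := fun i => if i ∈ J then b i else (1:ℝ) with hc
  have hc0 : ∀ i, 0 ≤ c i := by
    intro i; simp only [hc]; split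
    · exact hb0 i
    · norm_num
  have hc1 : ∀ i, c i ≤ 1 := by
    intro i; simp only [hc]; split
    · exact le_of_lt (hb1 i)
    · exact le_refl 1
  have hMij : ∀ i j, M i j = (if i = j then (1:ℝ) else 0) - (1 - b j) * S j i * c i := by
    intro i j
    have h := congrFun (hM i) j
    by_cases hiJ : i ∈ J
    · simp only [hiJ, if_true] at h
      rw [h, hD]
      simp only [Matrix.sub_apply, Matrix.one_apply, Matrix.transpose_apply, hR j i, hc,
        hiJ, if_true]
    · simp only [hiJ, if_false] at h
      rw [h, hC]
      simp only [Matrix.sub_apply, Matrix.one_apply, Matrix.transpose_apply, hR j i, hA j i,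
        hc, hiJ, if_false]
      ring
  have hveq : ∀ j, v j = (1 - b j) * ∑ i, S j i * c i * v i := by
    intro j
    have h := congrFun hvM j
    simp only [Matrix.vecMul, dotProduct, Pi.zero_apply] at h
    have h1 : ∑ i, v i * M i j
        = v j - (1 - b j) * ∑ i, S j i * c i * v i := by
      rw [Finset.mul_sum]
      have h2 : ∀ i, v i * M i j
          = (if i = j then v i else 0) - (1 - b j) * (S j i * c i * v i) := by
        intro i; rw [hMij i j]; split <;> ring
      rw [Finset.sum_congr rfl (fun i _ => h2 i), Finset.sum_sub_distrib,
        Finset.sum_ite_eq' Finset.univ j v]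
      simp
    rw [h1] at h
    linarith
  have hbne : ∀ i, (1 - b i) ≠ 0 := fun i => ne_of_gt (hbpos i)
  set w : Fin n → ℝ := fun i => v i / (1 - b i) with hw
  have hvw : ∀ i, v i = (1 - b i) * w i := by
    intro i; simp only [hw]
    rw [mul_comm]
    exact (div_mul_cancel₀ (v i) (hbne i)).symm
  have hweq : ∀ j, w j = ∑ i, S j i * ((1 - b i) * c i) * w i := by
    intro j
    have h : (1 - b j) * w j = (1 - b j) * ∑ i, S j i * ((1 - b i) * c i) * w i := by
      rw [← hvw j, hveq j]
      congr 1
      exact Finset.sum_congr rfl fun i _ => by rw [hvw i]; ring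
    exact mul_left_cancel₀ (hbne j) h
  have hne : (Finset.univ : Finset (Fin n)).Nonempty := ⟨⟨0, hn⟩, Finset.mem_univ _⟩
  set m := Finset.univ.sup' hne (fun i => |w i|) with hm
  have hmax : ∀ i, |w i| ≤ m := fun i => Finset.le_sup' (fun i => |w i|) (Finset.mem_univ i)
  have hmpos : 0 < m := by
    obtain ⟨i, hi⟩ : ∃ i, w i ≠ 0 := by
      by_contra hcon; push_neg at hcon
      apply hv0
      funext i
      rw [hvw i, hcon i, mul_zero]; rfl
    exact lt_of_lt_of_le (abs_pos.mpr hi) (hmax i)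
  -- key step: a max-attaining node has no S-edge into J, and S-neighbors attain max
  have hkey : ∀ j, |w j| = m → ∀ i, 0 < S j i → i ∉ J ∧ |w i| = m := by
    intro j hj
    have hgnn : ∀ i, 0 ≤ S j i * ((1 - b i) * c i) := fun i =>
      mul_nonneg (hSnn j i) (mul_nonneg (le_of_lt (hbpos i)) (hc0 i))
    have h1 : m ≤ ∑ i, S j i * ((1 - b i) * c i) * |w i| := by
      calc m = |w j| := hj.symm
        _ = |∑ i, S j i * ((1 - b i) * c i) * w i| := by rw [hweq j]
        _ ≤ ∑ i, |S j i * ((1 - b i) * c i) * w i| := Finset.abs_sum_le_sum_abs _ _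
        _ = ∑ i, S j i * ((1 - b i) * c i) * |w i| := by
            refine Finset.sum_congr rfl fun i _ => ?_
            rw [abs_mul, abs_of_nonneg (hgnn i)]
    have h2 : ∑ i, S j i * ((1 - b i) * c i) * |w i|
        ≤ ∑ i, S j i * ((1 - b i) * c i) * m :=
      Finset.sum_le_sum fun i _ => mul_le_mul_of_nonneg_left (hmax i) (hgnn i)
    have h3 : ∑ i, S j i * ((1 - b i) * c i) * m ≤ ∑ i, S j i * (1 - b i) * m := by
      refine Finset.sum_le_sum fun i _ => ?_
      have : S j i * ((1 - b i) * c i) ≤ S j i * (1 - b i) := by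
        rw [← mul_assoc]
        nlinarith [hc1 i, mul_nonneg (hSnn j i) (le_of_lt (hbpos i))]
      exact mul_le_mul_of_nonneg_right this (le_of_lt hmpos)
    have h4 : ∑ i, S j i * (1 - b i) * m = m := by
      rw [← Finset.sum_mul, hrow j, one_mul]
    have e1 : ∑ i, S j i * ((1 - b i) * c i) * |w i| = m := by
      have := h3.trans h4.le
      linarith [h2]
    have e2 : ∑ i, S j i * ((1 - b i) * c i) * m = ∑ i, S j i * (1 - b i) * m := by
      rw [h4]
      have hle := h3
      have hge : m ≤ ∑ i, S j i * ((1 - b i) * c i) * m := by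
        calc m = ∑ i, S j i * ((1 - b i) * c i) * |w i| := e1.symm
          _ ≤ _ := h2
      linarith [h3.trans h4.le]
    -- from e2 : each term with i ∈ J has S j i = 0
    have hSJ : ∀ i ∈ J, S j i = 0 := by
      have hz : ∑ i, (S j i * (1 - b i) * m - S j i * ((1 - b i) * c i) * m) = 0 := by
        rw [Finset.sum_sub_distrib, e2, sub_self]
      have hterm : ∀ i ∈ Finset.univ,
          (0:ℝ) ≤ S j i * (1 - b i) * m - S j i * ((1 - b i) * c i) * m := by
        intro i _
        have : S j i * ((1 - b i) * c i) * m ≤ S j i * (1 - b i) * m := by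
          have h5 : S j i * ((1 - b i) * c i) ≤ S j i * (1 - b i) := by
            rw [← mul_assoc]
            nlinarith [hc1 i, mul_nonneg (hSnn j i) (le_of_lt (hbpos i))]
          exact mul_le_mul_of_nonneg_right h5 (le_of_lt hmpos)
        linarith
      have hall := (Finset.sum_eq_zero_iff_of_nonneg hterm).mp hz
      intro i hiJ
      have h6 := hall i (Finset.mem_univ i)
      have h7 : c i = b i := by simp [hc, hiJ]
      rw [h7] at h6
      -- S j i * (1-b i) * m - S j i * ((1-b i) * b i) * m = 0
      -- i.e. S j i * (1-b i) * (1-b i) * m = 0 ... solve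
      have h8 : S j i * (1 - b i) * (1 - b i) * m = 0 := by linear_combination h6
      have := hbpos i
      by_contra hSne
      have hSpos : 0 < S j i := lt_of_le_of_ne (hSnn j i) (Ne.symm hSne)
      nlinarith [mul_pos (mul_pos (mul_pos hSpos this) this) hmpos]
    -- from e1 : each i with positive weight has |w i| = m
    have hWm : ∀ i, 0 < S j i * ((1 - b i) * c i) → |w i| = m := by
      have hz : ∑ i, (S j i * ((1 - b i) * c i) * m - S j i * ((1 - b i) * c i) * |w i|) = 0 := by
        rw [Finset.sum_sub_distrib, e1]
        have e3 : ∑ i, S j i * ((1 - b i) * c i) * m = m := by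
          rw [e2, h4]
        rw [e3, sub_self]
      have hterm : ∀ i ∈ Finset.univ,
          (0:ℝ) ≤ S j i * ((1 - b i) * c i) * m - S j i * ((1 - b i) * c i) * |w i| := by
        intro i _
        have := mul_le_mul_of_nonneg_left (hmax i) (hgnn i)
        linarith
      have hall := (Finset.sum_eq_zero_iff_of_nonneg hterm).mp hz
      intro i hpos
      have h6 := hall i (Finset.mem_univ i)
      have h7 : S j i * ((1 - b i) * c i) * (m - |w i|) = 0 := by linear_combination h6
      rcases mul_eq_zero.mp h7 with h8 | h8
      · exact absurd h8 (ne_of_gt hpos)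
      · linarith [hmax i, h8]
    intro i hSpos
    have hiJ : i ∉ J := fun hiJ => (ne_of_gt hSpos) (hSJ i hiJ)
    refine ⟨hiJ, ?_⟩
    apply hWm
    have h7 : c i = 1 := by simp [hc, hiJ]
    rw [h7, mul_one]
    exact mul_pos hSpos (hbpos i)
  -- propagation along powers of S
  have hprop : ∀ k j, |w j| = m → ∀ i, 0 < (S ^ (k+1)) j i → i ∉ J ∧ |w i| = m := by
    intro k
    induction k with
    | zero =>
      intro j hj i hi
      rw [pow_one] at hi
      exact hkey j hj i hi
    | succ k ih =>
      intro j hj i hi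
      rw [pow_succ'] at hi
      rw [Matrix.mul_apply] at hi
      obtain ⟨l, -, hl⟩ : ∃ l ∈ Finset.univ, 0 < S j l * (S ^ (k+1)) l i := by
        by_contra hcon; push_neg at hcon
        have : ∑ l, S j l * (S ^ (k+1)) l i ≤ 0 := Finset.sum_nonpos fun l h => hcon l h
        linarith
      have ha : 0 < S j l := by
        rcases (hSnn j l).lt_or_eq with h | h
        · exact h
        · rw [← h, zero_mul] at hl; exact absurd hl (lt_irrefl 0)
      have hb' : 0 < (S ^ (k+1)) l i := by
        rcases (hSpnn (k+1) l i).lt_or_eq with h | h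
        · exact h
        · rw [← h, mul_zero] at hl; exact absurd hl (lt_irrefl 0)
      obtain ⟨-, hlm⟩ := hkey j hj l ha
      exact ih l hlm i hb'
  -- conclusion
  obtain ⟨j0, -, hj0⟩ := Finset.exists_mem_eq_sup' hne (fun i => |w i|)
  obtain ⟨i0, hi0J⟩ := hJ
  obtain ⟨k, hk1, hkpos⟩ := hFirr j0 i0
  have hSk : 0 < (S ^ k) j0 i0 := lt_of_lt_of_le hkpos (hpow k j0 i0).2
  obtain ⟨k', rfl⟩ : ∃ k', k = k' + 1 := ⟨k - 1, by omega⟩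
  exact (hprop k' j0 hj0.symm i0 hSk).1 hi0J
end

section
/- Suppose F is irreducible, let J be a nonempty subset of the index set, and let M be the matrix whose i-th row equals the i-th row of D when i ∈ J and equals the i-th row of C when i ∉ J. Then M is invertible and every entry of M⁻¹ is nonnegative; consequently, for every vector h with all components nonnegative, the unique solution j of M.mulVec j = h has all components nonnegative, and the vectors Rᵀ.mulVec j and Aᵀ.mulVec j also have all components nonnegative. -/
open Matrix

section AuxStmt17

open Finset

lemma pow_entry_nonneg {n : ℕ} (T : Matrix (Fin n) (Fin n) ℝ)
    (hT : ∀ i j, 0 ≤ T i j) : ∀ (t : ℕ) (i j : Fin n), 0 ≤ (T ^ t) i j := by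
  intro t
  induction t with
  | zero => intro i j; simp [Matrix.one_apply]; positivity
  | succ t ih =>
      intro i j
      rw [pow_succ, Matrix.mul_apply]
      exact Finset.sum_nonneg fun k _ => mul_nonneg (ih i k) (hT k j)

lemma key_inv_nonneg {n : ℕ} (hn : 1 ≤ n) (T : Matrix (Fin n) (Fin n) ℝ)
    (hT : ∀ i j, 0 ≤ T i j) (v : Fin n → ℝ) (hv : ∀ i, 0 < v i)
    (m : ℕ) (hm : 1 ≤ m)
    (H1 : ∀ j, ∑ i, v i * T i j ≤ v j)
    (H2 : ∀ j, ∑ i, v i * (T ^ m) i j < v j) :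
    IsUnit (1 - T) ∧ ∀ i j, 0 ≤ (1 - T)⁻¹ i j := by
  have hne : Nonempty (Fin n) := ⟨⟨0, hn⟩⟩
  have huniv : (Finset.univ : Finset (Fin n)).Nonempty := Finset.univ_nonempty
  set c : ℝ := Finset.univ.sup' huniv (fun j => (∑ i, v i * (T ^ m) i j) / v j) with hc
  have hTm : ∀ i j, 0 ≤ (T ^ m) i j := pow_entry_nonneg T hT m
  have hsum_nonneg : ∀ j, 0 ≤ ∑ i, v i * (T ^ m) i j := fun j =>
    Finset.sum_nonneg fun i _ => mul_nonneg (hv i).le (hTm i j)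
  have hc0 : 0 ≤ c := by
    obtain ⟨j⟩ := hne
    exact le_trans (div_nonneg (hsum_nonneg j) (hv j).le)
      (Finset.le_sup' (fun j => (∑ i, v i * (T ^ m) i j) / v j) (Finset.mem_univ j))
  have hc1 : c < 1 := by
    rw [hc, Finset.sup'_lt_iff]
    intro j _
    rw [div_lt_one (hv j)]
    exact H2 j
  have hcle : ∀ j, ∑ i, v i * (T ^ m) i j ≤ c * v j := by
    intro j
    rw [← div_le_iff₀ (hv j)]
    exact Finset.le_sup' (fun j => (∑ i, v i * (T ^ m) i j) / v j) (Finset.mem_univ j)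
  -- power bound
  have powbound : ∀ (k : ℕ) (j : Fin n), ∑ i, v i * (T ^ (m * k)) i j ≤ c ^ k * v j := by
    intro k
    induction k with
    | zero =>
        intro j
        simp [Matrix.one_apply, Finset.sum_ite_eq', mul_comm]
    | succ k ih =>
        intro j
        have hrw : T ^ (m * (k + 1)) = T ^ (m * k) * T ^ m := by
          rw [← pow_add]; ring_nf
        rw [hrw]
        have expand : ∑ i, v i * (T ^ (m * k) * T ^ m) i j
            = ∑ l, (∑ i, v i * (T ^ (m * k)) i l) * (T ^ m) l j := by
          simp only [Matrix.mul_apply, Finset.mul_sum, Finset.sum_mul]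
          rw [Finset.sum_comm]
          apply Finset.sum_congr rfl; intro l _
          apply Finset.sum_congr rfl; intro i _
          ring
        rw [expand]
        calc ∑ l, (∑ i, v i * (T ^ (m * k)) i l) * (T ^ m) l j
            ≤ ∑ l, (c ^ k * v l) * (T ^ m) l j := by
              apply Finset.sum_le_sum; intro l _
              exact mul_le_mul_of_nonneg_right (ih l) (hTm l j)
          _ = c ^ k * ∑ l, v l * (T ^ m) l j := by
              rw [Finset.mul_sum]; apply Finset.sum_congr rfl; intro l _; ring
          _ ≤ c ^ k * (c * v j) :=
              mul_le_mul_of_nonneg_left (hcle j) (pow_nonneg hc0 k)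
          _ = c ^ (k + 1) * v j := by ring
  -- injectivity of vecMul
  have hinjective : ∀ x : Fin n → ℝ, x ᵥ* (1 - T) = 0 → x = 0 := by
    intro x hx
    have hfix : x ᵥ* T = x := by
      have h' : x ᵥ* (1 - T) = x - x ᵥ* T := by
        rw [Matrix.vecMul_sub, Matrix.vecMul_one]
      rw [h'] at hx
      exact (sub_eq_zero.mp hx).symm
    have hfixpow : ∀ t : ℕ, x ᵥ* (T ^ t) = x := by
      intro t
      induction t with
      | zero => simp [Matrix.vecMul_one]
      | succ t ih =>
          rw [pow_succ, ← Matrix.vecMul_vecMul, ih, hfix]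
    set X : ℝ := Finset.univ.sup' huniv (fun i => |x i| / v i) with hX
    have hXle : ∀ i, |x i| ≤ X * v i := by
      intro i
      have : |x i| / v i ≤ X := Finset.le_sup' (fun i => |x i| / v i) (Finset.mem_univ i)
      calc |x i| = (|x i| / v i) * v i := (div_mul_cancel₀ _ (hv i).ne').symm
        _ ≤ X * v i := mul_le_mul_of_nonneg_right this (hv i).le
    have hX0 : 0 ≤ X := by
      obtain ⟨i⟩ := hne
      exact le_trans (div_nonneg (abs_nonneg _) (hv i).le)
        (Finset.le_sup' (fun i => |x i| / v i) (Finset.mem_univ i))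
    obtain ⟨j, _, hj⟩ := Finset.exists_mem_eq_sup' huniv (fun i => |x i| / v i)
    have hbound : |x j| ≤ X * (c * v j) := by
      have h1 : |x j| = |∑ i, x i * (T ^ m) i j| := by
        conv_lhs => rw [← hfixpow m]
        rfl
      calc |x j| = |∑ i, x i * (T ^ m) i j| := h1
        _ ≤ ∑ i, |x i * (T ^ m) i j| := Finset.abs_sum_le_sum_abs _ _
        _ = ∑ i, |x i| * (T ^ m) i j := by
            apply Finset.sum_congr rfl; intro i _
            rw [abs_mul, abs_of_nonneg (hTm i j)]
        _ ≤ ∑ i, (X * v i) * (T ^ m) i j := by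
            apply Finset.sum_le_sum; intro i _
            exact mul_le_mul_of_nonneg_right (hXle i) (hTm i j)
        _ = X * ∑ i, v i * (T ^ m) i j := by
            rw [Finset.mul_sum]; apply Finset.sum_congr rfl; intro i _; ring
        _ ≤ X * (c * v j) := mul_le_mul_of_nonneg_left (hcle j) hX0
    have hXc : X ≤ X * c := by
      have hxj : |x j| = X * v j := by
        have hXj : X = |x j| / v j := by rw [hX, hj]
        rw [hXj, div_mul_cancel₀ _ (hv j).ne']
      have := hbound
      rw [hxj] at this
      nlinarith [hv j]
    have hXzero : X = 0 := by nlinarith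
    funext i
    have := hXle i
    rw [hXzero, zero_mul] at this
    simpa using abs_eq_zero.mp (le_antisymm this (abs_nonneg _))
  -- determinant nonzero
  have hdet : (1 - T).det ≠ 0 := by
    intro h0
    obtain ⟨x, hx0, hx⟩ := (Matrix.exists_vecMul_eq_zero_iff).mpr h0
    exact hx0 (hinjective x hx)
  have hunit : IsUnit (1 - T) := by
    rw [Matrix.isUnit_iff_isUnit_det]
    exact isUnit_iff_ne_zero.mpr hdet
  refine ⟨hunit, ?_⟩
  set B := (1 - T)⁻¹ with hB
  have hBmul : (1 - T) * B = 1 := Matrix.mul_nonsing_inv _ (isUnit_iff_ne_zero.mpr hdet)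
  have hgeom : ∀ t : ℕ, B = (∑ k ∈ Finset.range t, T ^ k) + T ^ t * B := by
    intro t
    have h1 : (∑ k ∈ Finset.range t, T ^ k) * (1 - T) = 1 - T ^ t := by
      have := geom_sum_mul T t
      have h2 : (∑ k ∈ Finset.range t, T ^ k) * (1 - T)
          = -((∑ k ∈ Finset.range t, T ^ k) * (T - 1)) := by
        rw [mul_sub, mul_sub, mul_one, neg_sub]
      rw [h2, this, neg_sub]
    have h3 : (∑ k ∈ Finset.range t, T ^ k) * ((1 - T) * B) = (1 - T ^ t) * B := by
      rw [← Matrix.mul_assoc, h1]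
    rw [hBmul, Matrix.mul_one, sub_mul, one_mul] at h3
    rw [h3]
    abel
  -- entry row-sum bound
  set V : ℝ := ∑ l, v l with hV
  set β : ℝ := ∑ p, ∑ q, |B p q| with hβ
  have hβ0 : 0 ≤ β := Finset.sum_nonneg fun p _ => Finset.sum_nonneg fun q _ => abs_nonneg _
  have hβentry : ∀ l j, |B l j| ≤ β := by
    intro l j
    calc |B l j| ≤ ∑ q, |B l q| :=
          Finset.single_le_sum (f := fun q => |B l q|) (fun q _ => abs_nonneg _)
            (Finset.mem_univ j)
      _ ≤ β := Finset.single_le_sum (f := fun p => ∑ q, |B p q|)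
          (fun p _ => Finset.sum_nonneg fun q _ => abs_nonneg _) (Finset.mem_univ l)
  intro i j
  by_contra hneg
  push_neg at hneg
  have hrowsum : ∀ k : ℕ, ∑ l, (T ^ (m * k)) i l ≤ c ^ k * V / v i := by
    intro k
    have : ∀ l, (T ^ (m * k)) i l ≤ c ^ k * v l / v i := by
      intro l
      rw [le_div_iff₀ (hv i)]
      calc (T ^ (m * k)) i l * v i = v i * (T ^ (m * k)) i l := by ring
        _ ≤ ∑ i', v i' * (T ^ (m * k)) i' l :=
            Finset.single_le_sum (fun i' _ => mul_nonneg (hv i').le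
              (pow_entry_nonneg T hT _ i' l)) (Finset.mem_univ i)
        _ ≤ c ^ k * v l := powbound k l
    calc ∑ l, (T ^ (m * k)) i l ≤ ∑ l, c ^ k * v l / v i := Finset.sum_le_sum fun l _ => this l
      _ = c ^ k * V / v i := by rw [hV, Finset.mul_sum, Finset.sum_div]
  set Q : ℝ := β * V / v i with hQ
  have hV0 : 0 ≤ V := Finset.sum_nonneg fun l _ => (hv l).le
  have hQ0 : 0 ≤ Q := div_nonneg (mul_nonneg hβ0 hV0) (hv i).le
  have hBlow : ∀ k : ℕ, -(Q * c ^ k) ≤ B i j := by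
    intro k
    have hg := hgeom (m * k)
    have hentry : B i j = (∑ p ∈ Finset.range (m * k), (T ^ p) i j)
        + ∑ l, (T ^ (m * k)) i l * B l j := by
      conv_lhs => rw [hg]
      simp [Matrix.add_apply, Matrix.mul_apply, Matrix.sum_apply]
    have hsum1 : 0 ≤ ∑ p ∈ Finset.range (m * k), (T ^ p) i j :=
      Finset.sum_nonneg fun p _ => pow_entry_nonneg T hT p i j
    have hsum2 : -(Q * c ^ k) ≤ ∑ l, (T ^ (m * k)) i l * B l j := by
      calc -(Q * c ^ k) = -β * (c ^ k * V / v i) := by rw [hQ]; ring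
        _ ≤ -β * (∑ l, (T ^ (m * k)) i l) := by
            apply mul_le_mul_of_nonpos_left (hrowsum k) (by linarith)
        _ = ∑ l, (T ^ (m * k)) i l * (-β) := by
            rw [Finset.mul_sum]; apply Finset.sum_congr rfl; intro l _; ring
        _ ≤ ∑ l, (T ^ (m * k)) i l * B l j := by
            apply Finset.sum_le_sum; intro l _
            apply mul_le_mul_of_nonneg_left _ (pow_entry_nonneg T hT _ i l)
            have := hβentry l j
            rw [abs_le] at this
            linarith [this.1]
    linarith
  have hε : 0 < -(B i j) / (Q + 1) := div_pos (by linarith) (by linarith)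
  obtain ⟨k, hk⟩ := exists_pow_lt_of_lt_one hε hc1
  have h1 : -(Q * c ^ k) ≤ B i j := hBlow k
  have h2 : Q * c ^ k ≤ Q * (-(B i j) / (Q + 1)) :=
    mul_le_mul_of_nonneg_left hk.le hQ0
  have h3 : Q * (-(B i j) / (Q + 1)) < (Q + 1) * (-(B i j) / (Q + 1)) := by
    apply mul_lt_mul_of_pos_right _ hε
    linarith
  have h4 : (Q + 1) * (-(B i j) / (Q + 1)) = -(B i j) := by
    rw [mul_comm]
    exact div_mul_cancel₀ _ (by linarith)
  linarith


end AuxStmt17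

/-- Suppose `F` is irreducible, let `J` be a nonempty subset of
the index set, and let `M` be the matrix whose `i`-th row equals the `i`-th
row of `D` when `i ∈ J` and equals the `i`-th row of `C` when `i ∉ J`. Then
`M` is invertible and every entry of `M⁻¹` is nonnegative; consequently, for
every vector `h` with all components nonnegative, the unique solution `x` of
`M.mulVec x = h` has all components nonnegative, and the vectors
`Rᵀ.mulVec x` and `Aᵀ.mulVec x` also have all components nonnegative. -/
theorem stmt_17 (n : ℕ) (hn : 1 ≤ n)
    (F : Matrix (Fin n) (Fin n) ℝ)
    (hFnonneg : ∀ i j, 0 ≤ F i j)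
    (hFrow : ∀ i, ∑ j, F i j = 1)
    (b : Fin n → ℝ) (hb0 : ∀ j, 0 ≤ b j) (hb1 : ∀ j, b j < 1)
    (K : Matrix (Fin n) (Fin n) ℝ)
    (hK : ∀ i j, K i j = F i j * b j)
    (hInv : IsUnit (1 - K))
    (S : Matrix (Fin n) (Fin n) ℝ)
    (hS : S = (1 - K)⁻¹ * F)
    (A R : Matrix (Fin n) (Fin n) ℝ)
    (hA : ∀ i j, A i j = (1 - b i) * S i j * (1 - b j))
    (hR : ∀ i j, R i j = (1 - b i) * S i j * b j)
    (C D : Matrix (Fin n) (Fin n) ℝ)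
    (hC : C = 1 - A.transpose - R.transpose)
    (hD : D = 1 - R.transpose)
    (hFirr : ∀ i j, ∃ k : ℕ, 1 ≤ k ∧ 0 < (F ^ k) i j)
    (J : Finset (Fin n)) (hJ : J.Nonempty)
    (M : Matrix (Fin n) (Fin n) ℝ)
    (hM : ∀ i, M i = if i ∈ J then D i else C i) :
    IsUnit M ∧
    (∀ i j, 0 ≤ M⁻¹ i j) ∧
    (∀ h : Fin n → ℝ, (∀ i, 0 ≤ h i) →
      ∀ x : Fin n → ℝ, M.mulVec x = h →
        (∀ i, 0 ≤ x i) ∧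
        (∀ i, 0 ≤ R.transpose.mulVec x i) ∧
        (∀ i, 0 ≤ A.transpose.mulVec x i)) := by
  have hne : Nonempty (Fin n) := ⟨⟨0, hn⟩⟩
  have huniv : (Finset.univ : Finset (Fin n)).Nonempty := Finset.univ_nonempty
  set v : Fin n → ℝ := fun i => 1 - b i with hvdef
  have hv0 : ∀ i, 0 < v i := fun i => by have := hb1 i; simp only [hvdef]; linarith
  have hdetK : IsUnit (1 - K).det := (Matrix.isUnit_iff_isUnit_det _).mp hInv
  have hK0 : ∀ i j, 0 ≤ K i j := fun i j => by
    rw [hK]; exact mul_nonneg (hFnonneg i j) (hb0 j)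
  -- β : uniform bound on b
  set β : ℝ := Finset.univ.sup' huniv b with hβdef
  have hβ1 : β < 1 := by
    rw [hβdef, Finset.sup'_lt_iff]; exact fun i _ => hb1 i
  have hbβ : ∀ i, b i ≤ β := fun i => Finset.le_sup' b (Finset.mem_univ i)
  -- nonnegativity of (1 - K)⁻¹
  have hKtrans := key_inv_nonneg hn K.transpose
    (fun i j => by rw [Matrix.transpose_apply]; exact hK0 j i)
    (fun _ => 1) (fun _ => one_pos) 1 le_rfl
    (fun j => by
      simp only [one_mul, Matrix.transpose_apply]
      calc ∑ i, K j i = ∑ i, F j i * b i := by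
            exact Finset.sum_congr rfl fun i _ => hK j i
        _ ≤ ∑ i, F j i * β := Finset.sum_le_sum fun i _ =>
            mul_le_mul_of_nonneg_left (hbβ i) (hFnonneg j i)
        _ = β * ∑ i, F j i := by rw [Finset.mul_sum]; exact Finset.sum_congr rfl fun i _ => mul_comm _ _
        _ = β := by rw [hFrow j, mul_one]
        _ ≤ 1 := hβ1.le)
    (fun j => by
      simp only [pow_one, one_mul, Matrix.transpose_apply]
      calc ∑ i, K j i = ∑ i, F j i * b i := Finset.sum_congr rfl fun i _ => hK j i
        _ ≤ ∑ i, F j i * β := Finset.sum_le_sum fun i _ =>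
            mul_le_mul_of_nonneg_left (hbβ i) (hFnonneg j i)
        _ = β * ∑ i, F j i := by rw [Finset.mul_sum]; exact Finset.sum_congr rfl fun i _ => mul_comm _ _
        _ = β := by rw [hFrow j, mul_one]
        _ < 1 := hβ1)
  have hKinv0 : ∀ i j, 0 ≤ (1 - K)⁻¹ i j := by
    intro i j
    have h1 : (1 : Matrix (Fin n) (Fin n) ℝ) - K.transpose = (1 - K).transpose := by
      rw [Matrix.transpose_sub, Matrix.transpose_one]
    have := hKtrans.2 j i
    rw [h1, ← Matrix.transpose_nonsing_inv] at this
    exact this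
  have hS0 : ∀ i j, 0 ≤ S i j := by
    intro i j
    rw [hS, Matrix.mul_apply]
    exact Finset.sum_nonneg fun k _ => mul_nonneg (hKinv0 i k) (hFnonneg k j)
  have hmulS : (1 - K) * S = F := by
    rw [hS, ← Matrix.mul_assoc, Matrix.mul_nonsing_inv _ hdetK, Matrix.one_mul]
  have hSF : ∀ i j, F i j ≤ S i j := by
    intro i j
    have h1 : F i j = S i j - (K * S) i j := by
      rw [← hmulS, Matrix.sub_mul, Matrix.one_mul, Matrix.sub_apply]
    have h2 : 0 ≤ (K * S) i j := by
      rw [Matrix.mul_apply]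
      exact Finset.sum_nonneg fun k _ => mul_nonneg (hK0 i k) (hS0 k j)
    linarith
  -- key identity : ∑ j, S i j * v j = 1
  have hSv : ∀ i, ∑ j, S i j * v j = 1 := by
    have hFv : F.mulVec v = (1 - K).mulVec (fun _ => 1) := by
      funext i
      have lhs : F.mulVec v i = 1 - ∑ j, F i j * b j := by
        simp only [Matrix.mulVec, dotProduct, hvdef, mul_sub, mul_one]
        rw [Finset.sum_sub_distrib, hFrow]
      have rhs : (1 - K).mulVec (fun _ => 1) i = 1 - ∑ j, F i j * b j := by
        simp only [Matrix.mulVec, dotProduct, Matrix.sub_apply, Matrix.one_apply, mul_one]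
        rw [Finset.sum_sub_distrib]
        congr 1
        · simp
        · exact Finset.sum_congr rfl fun j _ => hK i j
      rw [lhs, rhs]
    have hSmul : S.mulVec v = fun _ => (1 : ℝ) := by
      rw [hS, ← Matrix.mulVec_mulVec, hFv, Matrix.mulVec_mulVec,
        Matrix.nonsing_inv_mul _ hdetK, Matrix.one_mulVec]
    intro i
    have := congrFun hSmul i
    simpa [Matrix.mulVec, dotProduct] using this
  -- entry nonnegativity of A and R
  have hA0 : ∀ i j, 0 ≤ A i j := fun i j => by
    rw [hA]
    exact mul_nonneg (mul_nonneg (hv0 i).le (hS0 i j)) (hv0 j).le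
  have hR0 : ∀ i j, 0 ≤ R i j := fun i j => by
    rw [hR]
    exact mul_nonneg (mul_nonneg (hv0 i).le (hS0 i j)) (hb0 j)
  -- the matrix N with M = 1 - N
  set N : Matrix (Fin n) (Fin n) ℝ :=
    Matrix.of (fun i j => if i ∈ J then R.transpose i j else A.transpose i j + R.transpose i j)
    with hNdef
  have hMN : M = 1 - N := by
    funext i j
    have hMi := congrFun (hM i) j
    by_cases hiJ : i ∈ J
    · rw [hMi, if_pos hiJ, hD]
      simp [hNdef, hiJ, Matrix.sub_apply]
    · rw [hMi, if_neg hiJ, hC]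
      simp only [hNdef, Matrix.of_apply, if_neg hiJ, Matrix.sub_apply]
      ring
  have hN0 : ∀ i j, 0 ≤ N i j := by
    intro i j
    simp only [hNdef, Matrix.of_apply]
    by_cases hiJ : i ∈ J
    · rw [if_pos hiJ]; exact hR0 j i
    · rw [if_neg hiJ]; exact add_nonneg (hA0 j i) (hR0 j i)
  -- weighted column sums
  have hARsum : ∀ j, ∑ i, v i * (A.transpose i j + R.transpose i j) = v j := by
    intro j
    have hterm : ∀ i, v i * (A.transpose i j + R.transpose i j) = v j * (S j i * v i) := by
      intro i
      simp only [Matrix.transpose_apply, hA, hR, hvdef]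
      ring
    rw [Finset.sum_congr rfl fun i _ => hterm i, ← Finset.mul_sum, hSv j, mul_one]
  have hNsum : ∀ j, ∑ i, v i * N i j ≤ v j := by
    intro j
    calc ∑ i, v i * N i j ≤ ∑ i, v i * (A.transpose i j + R.transpose i j) := by
          apply Finset.sum_le_sum
          intro i _
          apply mul_le_mul_of_nonneg_left _ (hv0 i).le
          simp only [hNdef, Matrix.of_apply]
          by_cases hiJ : i ∈ J
          · rw [if_pos hiJ]; have := hA0 j i; simp only [Matrix.transpose_apply]; linarith
          · rw [if_neg hiJ]
      _ = v j := hARsum j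
  -- the sequence of weighted column sums of powers of N
  have hNpow0 : ∀ (t : ℕ) i j, 0 ≤ (N ^ t) i j := pow_entry_nonneg N hN0
  set u : ℕ → Fin n → ℝ := fun t j => ∑ i, v i * (N ^ t) i j with hudef
  have hu0 : ∀ j, u 0 j = v j := by
    intro j
    simp [hudef, Matrix.one_apply, mul_ite, mul_one, mul_zero]
  have expandsucc : ∀ t j, u (t + 1) j = ∑ l, u t l * N l j := by
    intro t j
    simp only [hudef, pow_succ, Matrix.mul_apply, Finset.mul_sum, Finset.sum_mul]
    rw [Finset.sum_comm]
    apply Finset.sum_congr rfl; intro l _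
    apply Finset.sum_congr rfl; intro i _
    ring
  have ule : ∀ t j, u t j ≤ v j := by
    intro t
    induction t with
    | zero => intro j; rw [hu0]
    | succ t ih =>
        intro j
        rw [expandsucc]
        calc ∑ l, u t l * N l j ≤ ∑ l, v l * N l j := by
              apply Finset.sum_le_sum
              intro l _
              exact mul_le_mul_of_nonneg_right (ih l) (hN0 l j)
          _ ≤ v j := hNsum j
    -- note: also gives monotonicity below
  have umono : ∀ t j, u (t + 1) j ≤ u t j := by
    intro t j
    have expandsucc' : u (t + 1) j = ∑ k, (∑ i, v i * N i k) * (N ^ t) k j := by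
      simp only [hudef, pow_succ', Matrix.mul_apply, Finset.mul_sum, Finset.sum_mul]
      rw [Finset.sum_comm]
      apply Finset.sum_congr rfl; intro l _
      apply Finset.sum_congr rfl; intro i _
      ring
    rw [expandsucc']
    apply Finset.sum_le_sum
    intro k _
    exact mul_le_mul_of_nonneg_right (hNsum k) (hNpow0 t k j)
  have ugood_mono : ∀ t t' j, t ≤ t' → u t j < v j → u t' j < v j := by
    intro t t' j htt' hgood
    induction htt' with
    | refl => exact hgood
    | step h ih => exact lt_of_le_of_lt (umono _ j) ih
  have G1 : ∀ j i0, i0 ∈ J → 0 < S j i0 → u 1 j < v j := by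
    intro j i0 hi0 hSpos
    have hlt : ∑ i, v i * N i j < ∑ i, v i * (A.transpose i j + R.transpose i j) := by
      apply Finset.sum_lt_sum
      · intro i _
        apply mul_le_mul_of_nonneg_left _ (hv0 i).le
        simp only [hNdef, Matrix.of_apply]
        by_cases hiJ : i ∈ J
        · rw [if_pos hiJ]; have := hA0 j i; simp only [Matrix.transpose_apply]; linarith
        · rw [if_neg hiJ]
      · refine ⟨i0, Finset.mem_univ i0, ?_⟩
        apply mul_lt_mul_of_pos_left _ (hv0 i0)
        simp only [hNdef, Matrix.of_apply, if_pos hi0, Matrix.transpose_apply]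
        have hApos : 0 < A j i0 := by
          rw [hA]
          exact mul_pos (mul_pos (hv0 j) hSpos) (hv0 i0)
        linarith
    have h1 : u 1 j = ∑ i, v i * N i j := by simp [hudef, pow_one]
    rw [h1]
    calc ∑ i, v i * N i j < ∑ i, v i * (A.transpose i j + R.transpose i j) := hlt
      _ = v j := hARsum j
  have G2 : ∀ t k j, u t k < v k → 0 < N k j → u (t + 1) j < v j := by
    intro t k j hk hNkj
    rw [expandsucc]
    calc ∑ l, u t l * N l j < ∑ l, v l * N l j := by
          apply Finset.sum_lt_sum
          · intro l _
            exact mul_le_mul_of_nonneg_right (ule t l) (hN0 l j)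
          · exact ⟨k, Finset.mem_univ k, mul_lt_mul_of_pos_right hk hNkj⟩
      _ ≤ v j := hNsum j
  have hFpow0 : ∀ (t : ℕ) i j, 0 ≤ (F ^ t) i j := pow_entry_nonneg F hFnonneg
  -- main reachability claim
  have Claim : ∀ k : ℕ, ∀ j j', 0 < (F ^ (k + 1)) j j' → j' ∈ J →
      ∃ t, 1 ≤ t ∧ u t j < v j := by
    intro k
    induction k with
    | zero =>
        intro j j' hF hj'
        rw [pow_one] at hF
        exact ⟨1, le_rfl, G1 j j' hj' (lt_of_lt_of_le hF (hSF j j'))⟩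
    | succ k ih =>
        intro j j' hF hj'
        rw [pow_succ', Matrix.mul_apply] at hF
        have hexists : ∃ c, (0 : ℝ) < F j c * (F ^ (k + 1)) c j' := by
          by_contra hcon
          push_neg at hcon
          have : ∑ c, F j c * (F ^ (k + 1)) c j' ≤ 0 :=
            Finset.sum_nonpos fun c _ => hcon c
          linarith
        obtain ⟨c, hc⟩ := hexists
        have hFc : 0 < F j c := by
          rcases mul_pos_iff.mp hc with ⟨h1, _⟩ | ⟨h1, h2⟩
          · exact h1
          · exact absurd (hFpow0 (k + 1) c j') (not_le.mpr h2)
        have hFk : 0 < (F ^ (k + 1)) c j' := by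
          rcases mul_pos_iff.mp hc with ⟨_, h2⟩ | ⟨h1, _⟩
          · exact h2
          · exact absurd (hFnonneg j c) (not_le.mpr h1)
        by_cases hcJ : c ∈ J
        · exact ⟨1, le_rfl, G1 j c hcJ (lt_of_lt_of_le hFc (hSF j c))⟩
        · obtain ⟨t, ht1, htc⟩ := ih c j' hFk hj'
          have hNcj : 0 < N c j := by
            simp only [hNdef, Matrix.of_apply, if_neg hcJ, Matrix.transpose_apply]
            have hApos : 0 < A j c := by
              rw [hA]
              exact mul_pos (mul_pos (hv0 j) (lt_of_lt_of_le hFc (hSF j c))) (hv0 c)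
            have := hR0 j c
            linarith
          exact ⟨t + 1, by omega, G2 t c j htc hNcj⟩
  have hgood : ∀ j, ∃ t, 1 ≤ t ∧ u t j < v j := by
    intro j
    obtain ⟨j0, hj0⟩ := hJ
    obtain ⟨k, hk1, hkpos⟩ := hFirr j j0
    obtain ⟨k', rfl⟩ : ∃ k', k = k' + 1 := ⟨k - 1, by omega⟩
    exact Claim k' j j0 hkpos hj0
  choose tf htf1 htf2 using hgood
  set m : ℕ := Finset.univ.sup tf with hmdef
  have hm1 : 1 ≤ m := by
    obtain ⟨j⟩ := hne
    exact le_trans (htf1 j) (Finset.le_sup (Finset.mem_univ j))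
  have H2 : ∀ j, ∑ i, v i * (N ^ m) i j < v j := by
    intro j
    have : u m j < v j :=
      ugood_mono (tf j) m j (Finset.le_sup (Finset.mem_univ j)) (htf2 j)
    simpa [hudef] using this
  obtain ⟨hunit, hinv0⟩ := key_inv_nonneg hn N hN0 v hv0 m hm1 hNsum H2
  have hunitM : IsUnit M := by rw [hMN]; exact hunit
  have hMinv0 : ∀ i j, 0 ≤ M⁻¹ i j := by
    intro i j
    rw [hMN]
    exact hinv0 i j
  refine ⟨hunitM, hMinv0, ?_⟩
  intro h h0 x hx
  have hdetM : IsUnit M.det := (Matrix.isUnit_iff_isUnit_det _).mp hunitM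
  have hxeq : M⁻¹.mulVec h = x := by
    rw [← hx, Matrix.mulVec_mulVec, Matrix.nonsing_inv_mul _ hdetM, Matrix.one_mulVec]
  have hx0 : ∀ i, 0 ≤ x i := by
    intro i
    rw [← hxeq]
    simp only [Matrix.mulVec, dotProduct]
    exact Finset.sum_nonneg fun j _ => mul_nonneg (hMinv0 i j) (h0 j)
  refine ⟨hx0, ?_, ?_⟩
  · intro i
    simp only [Matrix.mulVec, dotProduct, Matrix.transpose_apply]
    exact Finset.sum_nonneg fun j _ => mul_nonneg (hR0 j i) (hx0 j)
  · intro i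
    simp only [Matrix.mulVec, dotProduct, Matrix.transpose_apply]
    exact Finset.sum_nonneg fun j _ => mul_nonneg (hA0 j i) (hx0 j)
end

section
/- Suppose b j = γ for all j, where γ ∈ [0,1). Then every column sum of C is zero, i.e. ∑_i C i j = 0 for every j; consequently, for every vector x one has ∑_i (C.mulVec x) i = 0. -/
open Matrix

/-- Suppose `b j = γ` for all `j`, where `γ ∈ [0,1)`. Then every
column sum of `C` is zero, i.e. `∑_i C i j = 0` for every `j`; consequently,
for every vector `x` one has `∑_i (C.mulVec x) i = 0`. -/
theorem stmt_18 (n : ℕ) (hn : 1 ≤ n)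
    (F : Matrix (Fin n) (Fin n) ℝ)
    (hFnonneg : ∀ i j, 0 ≤ F i j)
    (hFrow : ∀ i, ∑ j, F i j = 1)
    (b : Fin n → ℝ) (hb0 : ∀ j, 0 ≤ b j) (hb1 : ∀ j, b j < 1)
    (γ : ℝ) (hγ0 : 0 ≤ γ) (hγ1 : γ < 1) (hbγ : ∀ j, b j = γ)
    (K : Matrix (Fin n) (Fin n) ℝ)
    (hK : ∀ i j, K i j = F i j * b j)
    (hInv : IsUnit (1 - K))
    (S : Matrix (Fin n) (Fin n) ℝ)
    (hS : S = (1 - K)⁻¹ * F)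
    (A R : Matrix (Fin n) (Fin n) ℝ)
    (hA : ∀ i j, A i j = (1 - b i) * S i j * (1 - b j))
    (hR : ∀ i j, R i j = (1 - b i) * S i j * b j)
    (C : Matrix (Fin n) (Fin n) ℝ)
    (hC : C = 1 - A.transpose - R.transpose) :
    (∀ j, ∑ i, C i j = 0) ∧
    (∀ x : Fin n → ℝ, ∑ i, C.mulVec x i = 0) := by
  have hγne : (1 - γ) ≠ 0 := by linarith
  set u : Fin n → ℝ := fun _ => 1 with hu
  have hFu : F.mulVec u = u := by
    funext i
    simp [mulVec, dotProduct, hu, hFrow i]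
  have hKu : (1 - K).mulVec u = (1 - γ) • u := by
    funext i
    simp only [mulVec, dotProduct, hu, mul_one, Pi.smul_apply, smul_eq_mul]
    have : ∀ j, (1 - K) i j = (1 : Matrix (Fin n) (Fin n) ℝ) i j - γ * F i j := by
      intro j
      simp [Matrix.sub_apply, hK, hbγ j]; ring
    rw [Finset.sum_congr rfl (fun j _ => this j)]
    rw [Finset.sum_sub_distrib, ← Finset.mul_sum, hFrow i]
    simp [Matrix.one_apply]
  have hdet : IsUnit (1 - K).det := (Matrix.isUnit_iff_isUnit_det _).mp hInv
  have hinvu : (1 - K)⁻¹.mulVec u = (1 - γ)⁻¹ • u := by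
    have h1 : (1 - K)⁻¹.mulVec ((1 - K).mulVec u) = u := by
      rw [Matrix.mulVec_mulVec, Matrix.nonsing_inv_mul _ hdet, Matrix.one_mulVec]
    rw [hKu, Matrix.mulVec_smul] at h1
    have := congrArg (fun v => (1 - γ)⁻¹ • v) h1
    simpa [smul_smul, inv_mul_cancel₀ hγne] using this
  have hSu : S.mulVec u = (1 - γ)⁻¹ • u := by
    rw [hS, ← Matrix.mulVec_mulVec, hFu, hinvu]
  have hSrow : ∀ j, ∑ i, S j i = (1 - γ)⁻¹ := by
    intro j
    have := congrFun hSu j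
    simpa [mulVec, dotProduct, hu] using this
  have hcol : ∀ j, ∑ i, C i j = 0 := by
    intro j
    have hCij : ∀ i, C i j = (1 : Matrix (Fin n) (Fin n) ℝ) i j - (1 - γ) * S j i := by
      intro i
      rw [hC]
      simp only [Matrix.sub_apply, Matrix.transpose_apply, hA, hR, hbγ]
      ring
    rw [Finset.sum_congr rfl (fun i _ => hCij i)]
    rw [Finset.sum_sub_distrib, ← Finset.mul_sum, hSrow j]
    have : ∑ i, (1 : Matrix (Fin n) (Fin n) ℝ) i j = 1 := by
      simp [Matrix.one_apply]
    rw [this, mul_inv_cancel₀ hγne, sub_self]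
  refine ⟨hcol, fun x => ?_⟩
  calc ∑ i, C.mulVec x i = ∑ i, ∑ j, C i j * x j := by simp [mulVec, dotProduct]
    _ = ∑ j, (∑ i, C i j) * x j := by rw [Finset.sum_comm]; simp [Finset.sum_mul]
    _ = 0 := by simp [hcol]
end

section
/- Let S be a subset of the index set and suppose there is a constant γ ∈ [0,1) with b j = γ for every index j not in S (while b i ∈ [0,1) is arbitrary for i ∈ S). If a vector x satisfies (C.mulVec x) i = 0 for every i ∈ S, then the total source sums to zero: ∑_i (C.mulVec x) i = 0. -/
open Matrix

/-- Let `Z` be a subset of the index set and suppose there is a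
constant `γ ∈ [0,1)` with `b j = γ` for every index `j` not in `Z` (while
`b i ∈ [0,1)` is arbitrary for `i ∈ Z`). If a vector `x` satisfies
`(C.mulVec x) i = 0` for every `i ∈ Z`, then the total source sums to zero:
`∑_i (C.mulVec x) i = 0`. -/
theorem stmt_19 (n : ℕ) (hn : 1 ≤ n)
    (F : Matrix (Fin n) (Fin n) ℝ)
    (hFnonneg : ∀ i j, 0 ≤ F i j)
    (hFrow : ∀ i, ∑ j, F i j = 1)
    (b : Fin n → ℝ) (hb0 : ∀ j, 0 ≤ b j) (hb1 : ∀ j, b j < 1)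
    (K : Matrix (Fin n) (Fin n) ℝ)
    (hK : ∀ i j, K i j = F i j * b j)
    (hInv : IsUnit (1 - K))
    (S : Matrix (Fin n) (Fin n) ℝ)
    (hS : S = (1 - K)⁻¹ * F)
    (A R : Matrix (Fin n) (Fin n) ℝ)
    (hA : ∀ i j, A i j = (1 - b i) * S i j * (1 - b j))
    (hR : ∀ i j, R i j = (1 - b i) * S i j * b j)
    (C : Matrix (Fin n) (Fin n) ℝ)
    (hC : C = 1 - A.transpose - R.transpose)
    (Z : Finset (Fin n))
    (γ : ℝ) (hγ0 : 0 ≤ γ) (hγ1 : γ < 1)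
    (hbγ : ∀ j, j ∉ Z → b j = γ)
    (x : Fin n → ℝ)
    (hx : ∀ i ∈ Z, C.mulVec x i = 0) :
    ∑ i, C.mulVec x i = 0 := by
  have hdet : IsUnit (1 - K).det := (Matrix.isUnit_iff_isUnit_det _).mp hInv
  -- F (1-b) = (1-K) 𝟙
  have hFu : F.mulVec (fun i => 1 - b i) = (1 - K).mulVec (fun _ => 1) := by
    funext i
    simp only [Matrix.mulVec, dotProduct, Matrix.sub_apply, mul_one, mul_sub,
      Finset.sum_sub_distrib, hFrow, hK, Matrix.one_apply]
    simp
  -- S (1-b) = 𝟙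
  have hu : S.mulVec (fun i => 1 - b i) = fun _ => 1 := by
    calc S.mulVec (fun i => 1 - b i)
        = ((1-K)⁻¹ * F).mulVec (fun i => 1 - b i) := by rw [hS]
      _ = (1-K)⁻¹.mulVec (F.mulVec (fun i => 1 - b i)) := by
          rw [← Matrix.mulVec_mulVec]
      _ = (1-K)⁻¹.mulVec ((1-K).mulVec (fun _ => 1)) := by rw [hFu]
      _ = ((1-K)⁻¹ * (1-K)).mulVec (fun _ => 1) := by rw [Matrix.mulVec_mulVec]
      _ = (1 : Matrix (Fin n) (Fin n) ℝ).mulVec (fun _ => 1) := by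
          rw [Matrix.nonsing_inv_mul _ hdet]
      _ = fun _ => 1 := Matrix.one_mulVec _
  have hrow : ∀ j, ∑ i, S j i * (1 - b i) = 1 := fun j => congrFun hu j
  -- column sums of C weighted by (1-b) vanish
  have hcol : ∀ j, ∑ i, (1 - b i) * C i j = 0 := by
    intro j
    have h1 : ∀ i, (1 - b i) * C i j
        = (1 - b i) * (if i = j then (1:ℝ) else 0) - (1 - b j) * (S j i * (1 - b i)) := by
      intro i
      simp only [hC, Matrix.sub_apply, Matrix.transpose_apply, hA, hR, Matrix.one_apply]
      ring
    rw [Finset.sum_congr rfl (fun i _ => h1 i), Finset.sum_sub_distrib,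
      ← Finset.mul_sum, hrow j, mul_one]
    simp [mul_ite]
  -- hence ∑ i, (1 - b i) * (C x) i = 0
  have key : ∑ i, (1 - b i) * C.mulVec x i = 0 := by
    simp only [Matrix.mulVec, dotProduct, Finset.mul_sum, ← mul_assoc]
    rw [Finset.sum_comm]
    refine Finset.sum_eq_zero fun j _ => ?_
    rw [← Finset.sum_mul, hcol j, zero_mul]
  -- split over Z and its complement
  have hsplitk : ∑ i ∈ Z, (1 - b i) * C.mulVec x i
      + ∑ i ∈ Zᶜ, (1 - b i) * C.mulVec x i = 0 := by
    rw [Finset.sum_add_sum_compl]; exact key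
  have hZk : ∑ i ∈ Z, (1 - b i) * C.mulVec x i = 0 :=
    Finset.sum_eq_zero fun i hi => by rw [hx i hi, mul_zero]
  have hZck : ∑ i ∈ Zᶜ, (1 - b i) * C.mulVec x i
      = (1 - γ) * ∑ i ∈ Zᶜ, C.mulVec x i := by
    rw [Finset.mul_sum]
    refine Finset.sum_congr rfl fun i hi => ?_
    rw [hbγ i (Finset.mem_compl.mp hi)]
  have hγne : (1 - γ) ≠ 0 := by linarith
  have hZc : ∑ i ∈ Zᶜ, C.mulVec x i = 0 := by
    have : (1 - γ) * ∑ i ∈ Zᶜ, C.mulVec x i = 0 := by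
      rw [← hZck]; linarith [hsplitk, hZk]
    exact (mul_eq_zero.mp this).resolve_left hγne
  have hZ : ∑ i ∈ Z, C.mulVec x i = 0 := Finset.sum_eq_zero hx
  calc ∑ i, C.mulVec x i
      = ∑ i ∈ Z, C.mulVec x i + ∑ i ∈ Zᶜ, C.mulVec x i :=
        (Finset.sum_add_sum_compl Z _).symm
    _ = 0 := by rw [hZ, hZc, add_zero]
end
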